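/- arXiv:2412.11352 — 2 statements merged into one kernel-verified Lean document; each statement's English description precedes it below -/
import Mathlib

section
/- Let X be an NPC space, let G be a t.d.l.c. group acting properly and continuously by isometries on X, let g ∈ G be hyperbolic with attracting point ξ₊ and repelling point ξ₋, and let U be an open subgroup of G. Then the product set U_{ξ₊}U_{ξ₋} = (U ∩ G_{ξ₊})(U ∩ G_{ξ₋}) is a neighbourhood of the identity in G. -/
open Filter Set Topology Pointwise MeasureTheory

section MetricDefs

variable {X : Type*} [MetricSpace X]

/-- `γ` restricted to `s` is a unit-speed geodesic (isometric embedding of `s ⊆ ℝ`). -/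
def IsGeodesicOn (γ : ℝ → X) (s : Set ℝ) : Prop :=
  ∀ u ∈ s, ∀ v ∈ s, dist (γ u) (γ v) = |u - v|

/-- A geodesic segment parametrized by arclength on `[a,b]`, from `x` to `y`. -/
def IsGeodesicSegment (γ : ℝ → X) (a b : ℝ) (x y : X) : Prop :=
  a ≤ b ∧ γ a = x ∧ γ b = y ∧ IsGeodesicOn γ (Set.Icc a b)

/-- A geodesic metric space: any two points are joined by a geodesic. -/
def GeodesicSpace (X : Type*) [MetricSpace X] : Prop :=
  ∀ x y : X, ∃ γ : ℝ → X, IsGeodesicSegment γ 0 (dist x y) x y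

/-- A geodesic ray (unit-speed on `[0,∞)`). -/
def IsGeodesicRay (γ : ℝ → X) : Prop := IsGeodesicOn γ (Set.Ici 0)

/-- A geodesic line (unit-speed on all of `ℝ`). -/
def IsGeodesicLine (γ : ℝ → X) : Prop := IsGeodesicOn γ Set.univ

/-- CAT(0) space, via the CN (Bruhat–Tits) inequality, equivalent to the CAT(0)
comparison-triangle inequality for geodesic spaces. -/
def CAT0 (X : Type*) [MetricSpace X] : Prop :=
  GeodesicSpace X ∧ ∀ x y z m : X, dist y m = dist y z / 2 → dist z m = dist y z / 2 →
    dist x m ^ 2 ≤ (dist x y ^ 2 + dist x z ^ 2) / 2 - dist y z ^ 2 / 4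

/-- All geodesic triangles are `δ`-thin: each point on one side lies within `δ` of the
union of the other two sides. -/
def SlimTriangles (X : Type*) [MetricSpace X] (δ : ℝ) : Prop :=
  ∀ (x y z : X) (γ₁ γ₂ γ₃ : ℝ → X),
    IsGeodesicSegment γ₁ 0 (dist x y) x y →
    IsGeodesicSegment γ₂ 0 (dist y z) y z →
    IsGeodesicSegment γ₃ 0 (dist z x) z x →
    ∀ s ∈ Set.Icc (0:ℝ) (dist x y),
      ∃ p ∈ γ₂ '' Set.Icc (0:ℝ) (dist y z) ∪ γ₃ '' Set.Icc (0:ℝ) (dist z x),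
        dist (γ₁ s) p ≤ δ

/-- Gromov `δ`-hyperbolic (δ-thin geodesic triangles). -/
def GromovHyperbolic (X : Type*) [MetricSpace X] (δ : ℝ) : Prop :=
  0 ≤ δ ∧ SlimTriangles X δ

/-- An NPC space: a geodesic space that is either complete CAT(0), or proper and
Gromov-hyperbolic. -/
def NPCSpace (X : Type*) [MetricSpace X] : Prop :=
  GeodesicSpace X ∧
    ((CompleteSpace X ∧ CAT0 X) ∨ (ProperSpace X ∧ ∃ δ : ℝ, GromovHyperbolic X δ))

/-- Uniquely geodesic space. -/
def UniquelyGeodesic (X : Type*) [MetricSpace X] : Prop :=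
  ∀ (x y : X) (γ₁ γ₂ : ℝ → X), IsGeodesicSegment γ₁ 0 (dist x y) x y →
    IsGeodesicSegment γ₂ 0 (dist x y) x y → ∀ t ∈ Set.Icc (0:ℝ) (dist x y), γ₁ t = γ₂ t

/-- Two rays are asymptotic: they stay at bounded distance. -/
def AsympRays (γ₁ γ₂ : ℝ → X) : Prop :=
  ∃ C : ℝ, ∀ t : ℝ, 0 ≤ t → dist (γ₁ t) (γ₂ t) ≤ C

/-- The boundary points of the rays `γ₁, γ₂` are opposite: some geodesic line has
`γ₁`'s class as backward endpoint and `γ₂`'s class as forward endpoint. -/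
def OppositeEnds (γ₁ γ₂ : ℝ → X) : Prop :=
  ∃ L : ℝ → X, IsGeodesicLine L ∧ AsympRays (fun t => L (-t)) γ₁ ∧ AsympRays L γ₂

/-- The sequence `x` converges to the boundary point represented by the ray `γ`:
it goes to infinity and geodesic segments from `γ 0` to `x n` eventually fellow-travel
`γ` within a uniform bound (this is convergence in the cone topology for CAT(0) spaces,
and Gromov convergence for hyperbolic spaces). -/
def ConvergesToEnd (x : ℕ → X) (γ : ℝ → X) : Prop :=
  Tendsto (fun n => dist (γ 0) (x n)) atTop atTop ∧
  ∃ C : ℝ, ∀ t : ℝ, 0 ≤ t → ∀ σ : ℕ → ℝ → X,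
    (∀ n, IsGeodesicSegment (σ n) 0 (dist (γ 0) (x n)) (γ 0) (x n)) →
    ∀ᶠ n in atTop, dist (σ n t) (γ t) ≤ C

/-- Geodesically convex subset. -/
def GeodesicallyConvex (Y : Set X) : Prop :=
  ∀ x ∈ Y, ∀ y ∈ Y, ∀ γ : ℝ → X, IsGeodesicSegment γ 0 (dist x y) x y →
    ∀ t ∈ Set.Icc (0:ℝ) (dist x y), γ t ∈ Y

/-- `Z` is an absorbing set for the boundary point of the ray `ρ` within `Y`. -/
def IsAbsorbing (Y Z : Set X) (ρ : ℝ → X) : Prop :=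
  ∃ r : ℝ → ℝ, Tendsto r atTop atTop ∧
    ∀ᶠ t in atTop, ∀ y ∈ Y, dist (ρ t) y ≤ r t → y ∈ Z

/-- The path (induced length) pseudo-distance inside a subset `T` of `X`. -/
noncomputable def pathDist (T : Set X) (x y : X) : ENNReal :=
  ⨅ (f : ℝ → X) (_ : ContinuousOn f (Set.Icc 0 1)) (_ : Set.MapsTo f (Set.Icc 0 1) T)
    (_ : f 0 = x) (_ : f 1 = y), eVariationOn f (Set.Icc 0 1)

end MetricDefs

section ActionDefs

variable {X : Type*} [MetricSpace X] {G : Type*} [Group G] [MulAction G X]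

/-- `G` acts on `X` by isometries. -/
def IsometricAction (G X : Type*) [Group G] [MetricSpace X] [MulAction G X] : Prop :=
  ∀ g : G, Isometry fun x : X => g • x

/-- The action of `G` on `X` is (metrically) proper. -/
def ProperAction (G X : Type*) [Group G] [TopologicalSpace G] [MetricSpace X]
    [MulAction G X] : Prop :=
  ∀ (x : X) (r : ℝ), IsCompact {g : G | dist (g • x) x ≤ r}

/-- The action of `G` on `X` is locally discrete: around each point, some ball of
positive radius has open pointwise fixator. -/
def BoundedElt (X : Type*) [MetricSpace X] {G : Type*} [Group G] [MulAction G X]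
    (g : G) : Prop :=
  ∀ x : X, Bornology.IsBounded (Set.range fun n : ℤ => g ^ n • x)

/-- The ray `γ` represents the attracting point of `g`: all forward orbits of `g`
converge to the corresponding boundary point. -/
def AttractsTo (g : G) (γ : ℝ → X) : Prop :=
  IsGeodesicRay γ ∧ ∀ x : X, ConvergesToEnd (fun n => g ^ n • x) γ

/-- `γ` is a (labelled) axis of `g`: `g` translates along the geodesic line `γ`. -/
def IsAxialWith (g : G) (γ : ℝ → X) : Prop :=
  IsGeodesicLine γ ∧ ∃ k : ℝ, 0 < k ∧ ∀ t : ℝ, g • γ t = γ (t + k)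

/-- `g` is an axial isometry of `X`. -/
def IsAxial (X : Type*) [MetricSpace X] {G : Type*} [Group G] [MulAction G X]
    (g : G) : Prop :=
  ∃ γ : ℝ → X, IsAxialWith g γ

/-- `n ↦ gⁿ • x` is a quasi-isometric embedding of `ℤ` into `X`. -/
def QIHyperbolic (X : Type*) [MetricSpace X] {G : Type*} [Group G] [MulAction G X]
    (g : G) : Prop :=
  ∃ (x : X) (a b : ℝ), 0 < a ∧ 0 ≤ b ∧ ∀ m n : ℤ,
    a⁻¹ * |(m : ℝ) - (n : ℝ)| - b ≤ dist (g ^ m • x) (g ^ n • x) ∧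
    dist (g ^ m • x) (g ^ n • x) ≤ a * |(m : ℝ) - (n : ℝ)| + b

/-- `g` acts as a hyperbolic isometry of the NPC space `X`: axial in the complete CAT(0)
case, QI-hyperbolic in the proper Gromov-hyperbolic case. -/
def IsHyperbolicIsom (X : Type*) [MetricSpace X] {G : Type*} [Group G] [MulAction G X]
    (g : G) : Prop :=
  (CompleteSpace X ∧ CAT0 X ∧ IsAxial X g) ∨
  (ProperSpace X ∧ (∃ δ : ℝ, GromovHyperbolic X δ) ∧ QIHyperbolic X g)

/-- Translation length of `g` on `X` (the limit of `d(x, gⁿx)/n`, realized as an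
infimum by subadditivity). -/
noncomputable def translationLength (X : Type*) [MetricSpace X] {G : Type*} [Group G]
    [MulAction G X] (g : G) : ℝ :=
  sInf {r : ℝ | ∃ (x : X) (n : ℕ), 0 < n ∧ r = dist x (g ^ n • x) / n}

/-- The stabilizer in `G` of the boundary point represented by the ray `γ`. -/
def endStabilizer (hiso : IsometricAction G X) (γ : ℝ → X) : Subgroup G where
  carrier := {g : G | AsympRays (fun t => g • γ t) γ}
  one_mem' := ⟨0, fun t _ => by simp⟩
  mul_mem' := by
    rintro a b ⟨Ca, hCa⟩ ⟨Cb, hCb⟩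
    refine ⟨Cb + Ca, fun t ht => ?_⟩
    have h1 : dist ((a * b) • γ t) (a • γ t) = dist (b • γ t) (γ t) := by
      rw [mul_smul]
      exact (hiso a).dist_eq _ _
    calc dist ((a * b) • γ t) (γ t)
        ≤ dist ((a * b) • γ t) (a • γ t) + dist (a • γ t) (γ t) := dist_triangle _ _ _
      _ ≤ Cb + Ca := add_le_add (h1 ▸ hCb t ht) (hCa t ht)
  inv_mem' := by
    rintro a ⟨Ca, hCa⟩
    refine ⟨Ca, fun t ht => ?_⟩
    have h1 : dist (a⁻¹ • γ t) (γ t) = dist (γ t) (a • γ t) := by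
      have := (hiso a).dist_eq (a⁻¹ • γ t) (γ t)
      simp only [smul_inv_smul] at this
      exact this.symm
    rw [h1, dist_comm]
    exact hCa t ht

/-- The setwise stabilizer of `Y ⊆ X` in `G`. -/
def setStabilizer (G : Type*) {X : Type*} [Group G] [MulAction G X] (Y : Set X) :
    Subgroup G where
  carrier := {g : G | ∀ y : X, y ∈ Y ↔ g • y ∈ Y}
  one_mem' := fun y => by simp
  mul_mem' := by
    intro a b ha hb y
    rw [mul_smul]
    exact (hb y).trans (ha (b • y))
  inv_mem' := by
    intro a ha y
    have := ha (a⁻¹ • y)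
    rw [smul_inv_smul] at this
    exact this.symm

/-- The pointwise fixator of `Y ⊆ X` in `G`. -/
def fixator (G : Type*) {X : Type*} [Group G] [MulAction G X] (Y : Set X) :
    Subgroup G where
  carrier := {g : G | ∀ y ∈ Y, g • y = y}
  one_mem' := fun y _ => one_smul _ y
  mul_mem' := by
    intro a b ha hb y hy
    rw [mul_smul, hb y hy, ha y hy]
  inv_mem' := by
    intro a ha y hy
    conv_lhs => rw [← ha y hy]
    rw [inv_smul_smul]

/-- The set of common fixed points in `X` of a set of group elements. -/
def fixedSet (X : Type*) {G : Type*} [Group G] [MulAction G X] (S : Set G) : Set X :=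
  {x : X | ∀ g ∈ S, g • x = x}

/-- The action is locally discrete: around each point there is a ball of positive
radius whose fixator is open. -/
def LocallyDiscreteAction (G X : Type*) [Group G] [TopologicalSpace G] [MetricSpace X]
    [MulAction G X] : Prop :=
  ∀ x : X, ∃ r : ℝ, 0 < r ∧ IsOpen ((fixator G (Metric.closedBall x r) : Set G))

end ActionDefs

section GroupDefs

variable {G : Type*} [Group G]

/-- The parabolic set of `g`: elements with relatively compact forward `g`-conjugation
orbit. -/
def parSet [TopologicalSpace G] (g : G) : Set G :=
  {x : G | IsCompact (closure (Set.range fun n : ℕ => g ^ n * x * (g ^ n)⁻¹))}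

/-- The contraction set of `g` modulo the subgroup `K`: elements whose forward
`g`-conjugation orbit converges to the trivial coset in `G ⧸ K`. -/
def conSet [TopologicalSpace G] (g : G) (K : Subgroup G) : Set G :=
  {x : G | Tendsto (fun n : ℕ => ((g ^ n * x * (g ^ n)⁻¹ : G) : G ⧸ K)) atTop
    (𝓝 ((1 : G) : G ⧸ K))}

/-- A compact open subgroup. -/
def CompactOpen [TopologicalSpace G] (U : Subgroup G) : Prop :=
  IsCompact (U : Set G) ∧ IsOpen (U : Set G)

/-- The displacement index `|gUg⁻¹ : U ∩ gUg⁻¹|`. -/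
noncomputable def scaleIndex (g : G) (U : Subgroup G) : ℕ :=
  U.relIndex (U.map (MulAut.conj g).toMonoidHom)

/-- The scale of `g`: minimum of `|gUg⁻¹ : U ∩ gUg⁻¹|` over compact open subgroups. -/
noncomputable def scale [TopologicalSpace G] (g : G) : ℕ :=
  sInf {n : ℕ | ∃ U : Subgroup G, CompactOpen U ∧ scaleIndex g U = n}

/-- `U` is a minimizing (tidy) compact open subgroup for `g`. -/
def IsMinimizing [TopologicalSpace G] (g : G) (U : Subgroup G) : Prop :=
  CompactOpen U ∧ scaleIndex g U = scale g

/-- For a t.d.l.c. group, the modular function satisfies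
`Δ(g) = |gUg⁻¹ : U ∩ gUg⁻¹| / |U : U ∩ gUg⁻¹|` for every compact open subgroup `U`.
`ModularEq g s` says that `Δ(g) = s`. -/
def ModularEq [TopologicalSpace G] (g : G) (s : ℕ) : Prop :=
  ∀ U : Subgroup G, CompactOpen U → scaleIndex g U = s * scaleIndex g⁻¹ U

/-- `U₊ = ⋂_{n ≥ 0} gⁿ U g⁻ⁿ`. -/
def Uplus (g : G) (U : Subgroup G) : Subgroup G :=
  ⨅ n : ℕ, U.map (MulAut.conj (g ^ n)).toMonoidHom

/-- `U₋ = ⋂_{n ≤ 0} gⁿ U g⁻ⁿ`. -/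
def Uminus (g : G) (U : Subgroup G) : Subgroup G :=
  ⨅ n : ℕ, U.map (MulAut.conj ((g ^ n)⁻¹)).toMonoidHom

/-- `U` is tidy for `g` (conditions TA and TB of Willis). -/
def TidyFor [TopologicalSpace G] (g : G) (U : Subgroup G) : Prop :=
  CompactOpen U ∧
  (U : Set G) = (Uplus g U : Set G) * (Uminus g U : Set G) ∧
  IsClosed (⋃ n : ℕ, (fun h : G => g ^ n * h * (g ^ n)⁻¹) '' (Uplus g U : Set G))

/-- The nub of `g`: intersection of all minimizing (tidy) subgroups for `g`. -/
noncomputable def nub [TopologicalSpace G] (g : G) : Subgroup G :=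
  ⨅ (U : Subgroup G) (_ : IsMinimizing g U), U

/-- The scale of an automorphism `α`: minimum of `|α(U) : α(U) ∩ U|` over compact open
subgroups. -/
noncomputable def scaleAut [TopologicalSpace G] (α : G ≃* G) : ℕ :=
  sInf {n : ℕ | ∃ U : Subgroup G, CompactOpen U ∧ U.relIndex (U.map α.toMonoidHom) = n}

end GroupDefs

section TreeDefs

variable {X : Type*} [MetricSpace X]

/-- `x ≤_T y`: some geodesic ray from `x` to the end of `ρ` contained in `T` passes
through `y`. -/
def leTree (T : Set X) (ρ : ℝ → X) (x y : X) : Prop :=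
  ∃ γ : ℝ → X, IsGeodesicRay γ ∧ γ 0 = x ∧ AsympRays γ ρ ∧ γ '' Set.Ici (0:ℝ) ⊆ T ∧
    ∃ t : ℝ, 0 ≤ t ∧ γ t = y

/-- The branching function of the tree `T` (with distinguished end given by `ρ`)
based at `x₀`. -/
noncomputable def branching (T : Set X) (ρ : ℝ → X) (x₀ : X) (m : ℝ) : ℕ :=
  if 0 < m then
    Nat.card {y : X | leTree T ρ y x₀ ∧ pathDist T x₀ y = ENNReal.ofReal m}
  else 1

end TreeDefs

/-!
By van Dantzig's theorem `U` contains a compact open subgroup `V`. Write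
`V_{[a,b]} = ⋂_{a ≤ m ≤ b} gᵐ V g⁻ᵐ` and `V₊ = V_{[0,∞)}`, `V₋ = V_{(-∞,0]}`. Following Willis,
the indices `[V_{[0,n]} : V_{[0,n+1]}]` are non-increasing, hence eventually constant, say from
`n = N` on; then `V_{[0,N]} = V_{[0,N+k]} V_{[-k,N]}` for every `k`, and a compactness argument
gives `V_{[0,N]} ⊆ V₊V₋`.

An element `a ∈ V₊` moves every point `gⁿx` of a forward orbit by a bounded amount. In an NPC
space geodesic segments with nearby endpoints fellow-travel (by convexity of the metric in the
CAT(0) case, by thin quadrilaterals in the hyperbolic case), so `a` moves the segments from `x` to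
`gⁿx`, which converge to the ray towards `ξ₊`, by a bounded amount: `a` fixes `ξ₊`. Symmetrically
`V₋` fixes `ξ₋`.
-/

section ConjugateIntersections

variable {G : Type*} [Group G]

theorem Subgroup.subset_mul_of_relIndex_eq {H K M : Subgroup G} (hKM : K ≤ M)
    (hM : H.relIndex M ≠ 0) (h : H.relIndex K = H.relIndex M) : (M : Set G) ⊆ K * H := by
  have : Finite (M ⧸ H.subgroupOf M) := Nat.finite_of_card_ne_zero hM
  have hbij : Function.Bijective (quotientSubgroupOfEmbeddingOfLE H hKM) :=
    (quotientSubgroupOfEmbeddingOfLE H hKM).injective.bijective_of_nat_card_le h.ge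
  intro u hu
  obtain ⟨q, hq⟩ := hbij.2 (QuotientGroup.mk ⟨u, hu⟩)
  induction q using QuotientGroup.induction_on with
  | H k =>
    rw [quotientSubgroupOfEmbeddingOfLE_apply_mk, QuotientGroup.eq, Subgroup.mem_subgroupOf] at hq
    exact ⟨k, k.2, k⁻¹ * u, by simpa using hq, mul_inv_cancel_left _ _⟩

def conjInfIcc (g : G) (V : Subgroup G) (a b : ℤ) : Subgroup G :=
  ⨅ m ∈ Finset.Icc a b, V.map (MulAut.conj (g ^ m)).toMonoidHom

variable {g x : G} {V : Subgroup G} {a b a' b' : ℤ}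

theorem mem_conjInfIcc :
    x ∈ conjInfIcc g V a b ↔ ∀ m, a ≤ m → m ≤ b → (g ^ m)⁻¹ * x * g ^ m ∈ V := by
  simp only [conjInfIcc, Subgroup.mem_iInf, Finset.mem_Icc, and_imp, Subgroup.mem_map_equiv,
    MulAut.conj_symm_apply]

theorem conjInfIcc_anti (ha : a' ≤ a) (hb : b ≤ b') :
    conjInfIcc g V a' b' ≤ conjInfIcc g V a b :=
  fun _ hx => mem_conjInfIcc.2 fun m hm hm' => mem_conjInfIcc.1 hx m (ha.trans hm) (hm'.trans hb)

theorem conjInfIcc_inf_conjInfIcc (ha : a ≤ a') (hab : a' ≤ b + 1) (hb : b ≤ b') :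
    conjInfIcc g V a b ⊓ conjInfIcc g V a' b' = conjInfIcc g V a b' := by
  refine le_antisymm (fun x hx => mem_conjInfIcc.2 fun m hm hm' => ?_)
    (le_inf (conjInfIcc_anti le_rfl (by omega)) (conjInfIcc_anti (by omega) le_rfl))
  rcases le_or_gt m b with hmb | hmb
  · exact mem_conjInfIcc.1 (Subgroup.mem_inf.1 hx).1 m hm hmb
  · exact mem_conjInfIcc.1 (Subgroup.mem_inf.1 hx).2 m (by omega) hm'

theorem map_conj_conjInfIcc (j : ℤ) :
    (conjInfIcc g V a b).map (MulAut.conj (g ^ j)).toMonoidHom =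
      conjInfIcc g V (a + j) (b + j) := by
  ext x
  simp only [Subgroup.mem_map_equiv, MulAut.conj_symm_apply, mem_conjInfIcc]
  refine ⟨fun hx m hm hm' => ?_, fun hx m hm hm' => ?_⟩
  · have := hx (m - j) (by omega) (by omega)
    rwa [show (g ^ (m - j))⁻¹ * ((g ^ j)⁻¹ * x * g ^ j) * g ^ (m - j)
      = (g ^ m)⁻¹ * x * g ^ m by group] at this
  · have := hx (m + j) (by omega) (by omega)
    rwa [show (g ^ (m + j))⁻¹ * x * g ^ (m + j)
      = (g ^ m)⁻¹ * ((g ^ j)⁻¹ * x * g ^ j) * g ^ m by group] at this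

theorem relIndex_conjInfIcc_add (j : ℤ) :
    (conjInfIcc g V (a + j) (b + j)).relIndex (conjInfIcc g V (a' + j) (b' + j)) =
      (conjInfIcc g V a b).relIndex (conjInfIcc g V a' b') := by
  rw [← map_conj_conjInfIcc, ← map_conj_conjInfIcc,
    Subgroup.relIndex_map_map_of_injective _ _ (MulAut.conj (g ^ j)).injective]

theorem mem_Uplus_iff : x ∈ Uplus g V ↔ ∀ m : ℤ, 0 ≤ m → (g ^ m)⁻¹ * x * g ^ m ∈ V := by
  simp only [Uplus, Subgroup.mem_iInf, Subgroup.mem_map_equiv, MulAut.conj_symm_apply]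
  refine ⟨fun h m hm => ?_, fun h n => by simpa using h n n.cast_nonneg⟩
  lift m to ℕ using hm
  simpa using h m

theorem mem_Uminus_iff : x ∈ Uminus g V ↔ ∀ m : ℤ, m ≤ 0 → (g ^ m)⁻¹ * x * g ^ m ∈ V := by
  simp only [Uminus, Subgroup.mem_iInf, Subgroup.mem_map_equiv, MulAut.conj_symm_apply]
  refine ⟨fun h m hm => ?_, fun h n => by simpa using h (-n) (by omega)⟩
  obtain ⟨n, rfl⟩ : ∃ n : ℕ, m = -n := ⟨m.natAbs, by omega⟩
  simpa using h n

theorem Uplus_le_self : Uplus g V ≤ V := fun x hx => by simpa using mem_Uplus_iff.1 hx 0 le_rfl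

theorem Uminus_eq_Uplus_inv : Uminus g V = Uplus g⁻¹ V := by
  simp only [Uminus, Uplus, inv_pow]

end ConjugateIntersections

section Tidying

variable {G : Type*} [Group G] [TopologicalSpace G] [IsTopologicalGroup G]

theorem Subgroup.relIndex_ne_zero_of_isOpen_of_isCompact {H K : Subgroup G}
    (hH : IsOpen (H : Set G)) (hK : IsCompact (K : Set G)) : H.relIndex K ≠ 0 := by
  have : CompactSpace K := isCompact_iff_compactSpace.mp hK
  have : Finite (K ⧸ H.subgroupOf K) :=
    Subgroup.quotient_finite_of_isOpen _ (hH.preimage continuous_subtype_val)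
  exact Nat.card_pos.ne'

variable {g : G} {V : Subgroup G}

theorem isOpen_conjInfIcc (hV : IsOpen (V : Set G)) (a b : ℤ) :
    IsOpen (conjInfIcc g V a b : Set G) := by
  simp only [conjInfIcc, Subgroup.coe_iInf]
  refine isOpen_biInter_finset fun m _ => ?_
  have : (V.map (MulAut.conj (g ^ m)).toMonoidHom : Set G) =
      (fun x => (g ^ m)⁻¹ * x * g ^ m) ⁻¹' V := by
    ext
    simp only [SetLike.mem_coe, Set.mem_preimage, Subgroup.mem_map_equiv, MulAut.conj_symm_apply]
  rw [this]
  exact hV.preimage (by fun_prop)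

theorem isCompact_conjInfIcc (hVo : IsOpen (V : Set G)) (hVc : IsCompact (V : Set G)) {a b : ℤ}
    (hab : a ≤ b) : IsCompact (conjInfIcc g V a b : Set G) := by
  have hcpt : IsCompact (conjInfIcc g V a a : Set G) := by
    simp only [conjInfIcc, Finset.Icc_self, Finset.mem_singleton, iInf_iInf_eq_left,
      Subgroup.coe_map]
    exact hVc.image (f := fun x => g ^ a * x * (g ^ a)⁻¹) (by fun_prop)
  exact hcpt.of_isClosed_subset (Subgroup.isClosed_of_isOpen _ (isOpen_conjInfIcc hVo a b))
    (conjInfIcc_anti le_rfl hab)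

theorem relIndex_conjInfIcc_succ_le (hVo : IsOpen (V : Set G)) (hVc : IsCompact (V : Set G))
    {n : ℤ} (hn : 0 ≤ n) :
    (conjInfIcc g V 0 (n + 1 + 1)).relIndex (conjInfIcc g V 0 (n + 1)) ≤
      (conjInfIcc g V 0 (n + 1)).relIndex (conjInfIcc g V 0 n) :=
  calc (conjInfIcc g V 0 (n + 1 + 1)).relIndex (conjInfIcc g V 0 (n + 1))
      = (conjInfIcc g V (0 + 1) (n + 1 + 1)).relIndex (conjInfIcc g V 0 (n + 1)) := by
        rw [← conjInfIcc_inf_conjInfIcc (b := n + 1) (a' := 0 + 1) (by omega) (by omega)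
          (by omega), Subgroup.inf_relIndex_left]
    _ ≤ (conjInfIcc g V (0 + 1) (n + 1 + 1)).relIndex (conjInfIcc g V (0 + 1) (n + 1)) :=
        Subgroup.relIndex_le_of_le_right (conjInfIcc_anti (by omega) le_rfl)
          (Subgroup.relIndex_ne_zero_of_isOpen_of_isCompact (isOpen_conjInfIcc hVo _ _)
            (isCompact_conjInfIcc hVo hVc (by omega)))
    _ = (conjInfIcc g V 0 (n + 1)).relIndex (conjInfIcc g V 0 n) := relIndex_conjInfIcc_add 1

theorem exists_relIndex_conjInfIcc_eq_pow (hVo : IsOpen (V : Set G))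
    (hVc : IsCompact (V : Set G)) :
    ∃ N c : ℕ, ∀ n : ℕ, N ≤ n → ∀ k : ℕ,
      (conjInfIcc g V 0 (n + k)).relIndex (conjInfIcc g V 0 n) = c ^ k := by
  set c : ℕ → ℕ := fun n => (conjInfIcc g V 0 (n + 1)).relIndex (conjInfIcc g V 0 n)
  have hc : Antitone c := antitone_nat_of_succ_le fun n => by
    simpa [c] using relIndex_conjInfIcc_succ_le (g := g) hVo hVc n.cast_nonneg
  obtain ⟨N, hN⟩ := WellFoundedLT.antitone_chain_condition hc
  refine ⟨N, c N, fun n hn k => ?_⟩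
  induction k with
  | zero => simp
  | succ k ih =>
    have hstep :
        (conjInfIcc g V 0 (n + (k + 1 : ℕ))).relIndex (conjInfIcc g V 0 (n + k)) = c N := by
      rw [hN (n + k) (by omega)]
      simp [c, add_assoc]
    rw [← Subgroup.relIndex_mul_relIndex _ (conjInfIcc g V 0 (n + k)) _
      (conjInfIcc_anti le_rfl (by omega)) (conjInfIcc_anti le_rfl (by omega)), hstep, ih,
      pow_succ, mul_comm]

theorem conjInfIcc_subset_mul (hVo : IsOpen (V : Set G)) (hVc : IsCompact (V : Set G))
    {N c : ℕ} (hN : ∀ n : ℕ, N ≤ n → ∀ k : ℕ,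
      (conjInfIcc g V 0 (n + k)).relIndex (conjInfIcc g V 0 n) = c ^ k) (k : ℕ) :
    (conjInfIcc g V 0 N : Set G) ⊆ conjInfIcc g V 0 (N + k) * conjInfIcc g V (-k) N := by
  have hM := hN N le_rfl k
  have hK : (conjInfIcc g V 0 (N + k)).relIndex (conjInfIcc g V (-k) N) = c ^ k := by
    rw [← Subgroup.inf_relIndex_right, inf_comm,
      conjInfIcc_inf_conjInfIcc (by omega) (by omega) (by omega), ← hN (N + k) (by omega) k,
      ← relIndex_conjInfIcc_add (a := 0) (b := (N + k : ℕ) + k) (a' := 0) (b' := (N + k : ℕ))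
        (-k)]
    congr 2 <;> push_cast <;> ring
  have hcover := Subgroup.subset_mul_of_relIndex_eq (conjInfIcc_anti (by omega) le_rfl)
    (hM ▸ Subgroup.relIndex_ne_zero_of_isOpen_of_isCompact (isOpen_conjInfIcc hVo _ _)
      (isCompact_conjInfIcc hVo hVc (by omega))) (hK.trans hM.symm)
  intro u hu
  obtain ⟨b, hb, a, ha, hba⟩ := hcover (inv_mem hu)
  refine ⟨a⁻¹, inv_mem ha, b⁻¹, inv_mem hb, ?_⟩
  rw [← inv_inv u, ← show b * a = u⁻¹ from hba, mul_inv_rev]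

theorem exists_isOpen_subgroup_subset_Uplus_mul_Uminus (hVo : IsOpen (V : Set G))
    (hVc : IsCompact (V : Set G)) :
    ∃ O : Subgroup G, IsOpen (O : Set G) ∧ (O : Set G) ⊆ Uplus g V * Uminus g V := by
  obtain ⟨N, c, hN⟩ := exists_relIndex_conjInfIcc_eq_pow (g := g) hVo hVc
  refine ⟨conjInfIcc g V 0 N, isOpen_conjInfIcc hVo _ _, fun u hu => ?_⟩
  -- `S k` is the set of left factors of the stage-`k` factorisations of `u`
  set S : ℕ → Set G := fun k =>
    (conjInfIcc g V 0 (N + k) : Set G) ∩ (fun a => a⁻¹ * u) ⁻¹' conjInfIcc g V (-k) N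
  have hS_closed (k : ℕ) : IsClosed (S k) :=
    (Subgroup.isClosed_of_isOpen _ (isOpen_conjInfIcc hVo _ _)).inter
      ((Subgroup.isClosed_of_isOpen _ (isOpen_conjInfIcc hVo _ _)).preimage (by fun_prop))
  have hS_anti (k : ℕ) : S (k + 1) ⊆ S k := fun a ha =>
    ⟨conjInfIcc_anti le_rfl (by omega) ha.1, conjInfIcc_anti (by omega) le_rfl ha.2⟩
  have hS_ne (k : ℕ) : (S k).Nonempty := by
    obtain ⟨a, ha, b, hb, rfl⟩ := conjInfIcc_subset_mul hVo hVc hN k hu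
    exact ⟨a, ha, by simpa using hb⟩
  have hS₀ : IsCompact (S 0) := (isCompact_conjInfIcc hVo hVc (by omega)).inter_right
    ((Subgroup.isClosed_of_isOpen _ (isOpen_conjInfIcc hVo _ _)).preimage (by fun_prop))
  obtain ⟨a, ha⟩ := IsCompact.nonempty_iInter_of_sequence_nonempty_isCompact_isClosed S hS_anti
    hS_ne hS₀ hS_closed
  rw [Set.mem_iInter] at ha
  refine ⟨a, ?_, a⁻¹ * u, ?_, mul_inv_cancel_left a u⟩
  · exact mem_Uplus_iff.2 fun m hm => mem_conjInfIcc.1 (ha m.toNat).1 m hm (by omega)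
  · exact mem_Uminus_iff.2 fun m hm => mem_conjInfIcc.1 (ha (-m).toNat).2 m (by omega) (by omega)

theorem exists_isCompact_isOpen_subgroup_subset [LocallyCompactSpace G]
    [TotallyDisconnectedSpace G] [T2Space G] {U : Set G} (hU : U ∈ 𝓝 1) :
    ∃ V : Subgroup G, IsCompact (V : Set G) ∧ IsOpen (V : Set G) ∧ (V : Set G) ⊆ U := by
  obtain ⟨s, hs1, hsU, hs⟩ := local_compact_nhds hU
  obtain ⟨W, ⟨hWclopen, hW1⟩, hWs⟩ :=
    (loc_compact_Haus_tot_disc_of_zero_dim.nhds_hasBasis (a := (1 : G))).mem_iff.1 hs1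
  have hW : IsCompact W := hs.of_isClosed_subset hWclopen.isClosed hWs
  obtain ⟨A, hA1, hAW⟩ := compact_open_separated_mul_left hW hWclopen.isOpen subset_rfl
  have hsmul (a : G) (ha : a ∈ A) : a • W ⊆ W :=
    (Set.smul_set_subset_mul ha).trans hAW
  set H := MulAction.stabilizer G W
  have hH : A ∩ A⁻¹ ⊆ H := fun a ha =>
    (hsmul a ha.1).antisymm (Set.subset_smul_set_iff.2 (hsmul a⁻¹ ha.2))
  have hHo : IsOpen (H : Set G) :=
    H.isOpen_of_mem_nhds (Filter.mem_of_superset (inter_mem hA1 (inv_mem_nhds_one G hA1)) hH)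
  have hHW : (H : Set G) ⊆ W := fun h hh => by
    have := Set.smul_mem_smul_set (a := h) hW1
    rwa [smul_eq_mul, mul_one, MulAction.mem_stabilizer_iff.1 hh] at this
  exact ⟨H, hW.of_isClosed_subset (H.isClosed_of_isOpen hHo) hHW, hHo,
    hHW.trans (hWs.trans hsU)⟩

end Tidying

section Geodesics

variable {X : Type*} [MetricSpace X] {γ : ℝ → X} {L s t : ℝ} {x y p : X}

theorem IsGeodesicOn.dist_eq_sub (h : IsGeodesicOn γ (Icc 0 L)) (hs : s ∈ Icc 0 L)
    (ht : t ∈ Icc 0 L) (hst : s ≤ t) : dist (γ s) (γ t) = t - s := by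
  rw [h s hs t ht, abs_sub_comm, abs_of_nonneg (sub_nonneg.2 hst)]

theorem IsGeodesicOn.dist_zero_eq (h : IsGeodesicOn γ (Icc 0 L)) (ht : t ∈ Icc 0 L) :
    dist (γ 0) (γ t) = t := by
  simpa using h.dist_eq_sub ⟨le_rfl, ht.1.trans ht.2⟩ ht ht.1

theorem IsGeodesicOn.dist_endpoint_eq (h : IsGeodesicOn γ (Icc 0 L)) (ht : t ∈ Icc 0 L) :
    dist (γ t) (γ L) = L - t :=
  h.dist_eq_sub ht ⟨ht.1.trans ht.2, le_rfl⟩ ht.2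

theorem IsGeodesicOn.continuousOn (h : IsGeodesicOn γ (Icc 0 L)) :
    ContinuousOn γ (Icc 0 L) :=
  (LipschitzOnWith.of_dist_le_mul (K := 1) fun u hu v hv => by
    simp [h u hu v hv, Real.dist_eq]).continuousOn

theorem IsGeodesicOn.isGeodesicSegment (h : IsGeodesicOn γ (Icc 0 L)) (hL : 0 ≤ L) :
    IsGeodesicSegment γ 0 (dist (γ 0) (γ L)) (γ 0) (γ L) := by
  rw [h.dist_zero_eq ⟨hL, le_rfl⟩]
  exact ⟨hL, rfl, rfl, h⟩

theorem IsGeodesicSegment.reverse (h : IsGeodesicSegment γ 0 (dist x y) x y) :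
    IsGeodesicSegment (fun s => γ (dist x y - s)) 0 (dist y x) y x := by
  obtain ⟨hd, h0, h1, hγ⟩ := h
  rw [dist_comm y x]
  refine ⟨hd, by simpa using h1, by simpa using h0, fun u hu v hv => ?_⟩
  rw [hγ _ ⟨by linarith [hu.2], by linarith [hu.1]⟩ _ ⟨by linarith [hv.2], by linarith [hv.1]⟩,
    abs_sub_comm]
  ring_nf

theorem IsGeodesicSegment.dist_le_of_mem_image (h : IsGeodesicSegment γ 0 (dist x y) x y)
    (hp : p ∈ γ '' Icc 0 (dist x y)) : dist x p ≤ dist x y ∧ dist p y ≤ dist x y := by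
  obtain ⟨-, h0, h1, hγ⟩ := h
  obtain ⟨s, hs, rfl⟩ := hp
  have h0s := hγ.dist_zero_eq hs
  have hs1 := hγ.dist_endpoint_eq hs
  rw [h0] at h0s
  rw [h1] at hs1
  constructor <;> linarith [hs.1, hs.2]

end Geodesics

theorem le_max_of_forall_le_midpoint {f : ℝ → ℝ} {a b t : ℝ} (hf : ContinuousOn f (Icc a b))
    (hmid : ∀ s ε, 0 < ε → s - ε ∈ Icc a b → s + ε ∈ Icc a b →
      f s ≤ (f (s - ε) + f (s + ε)) / 2)
    (ht : t ∈ Icc a b) : f t ≤ max (f a) (f b) := by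
  by_contra! hlt
  obtain ⟨t₀, ht₀, hmax⟩ := isCompact_Icc.exists_isMaxOn ⟨t, ht⟩ hf
  have hA : IsClosed (Icc a b ∩ f ⁻¹' {f t₀}) :=
    hf.preimage_isClosed_of_isClosed isClosed_Icc isClosed_singleton
  -- the leftmost maximiser `s` cannot satisfy the midpoint inequality
  obtain ⟨s, ⟨hs, hfs⟩, hleast⟩ :=
    (isCompact_Icc.of_isClosed_subset hA inter_subset_left).exists_isLeast ⟨t₀, ht₀, rfl⟩
  have hfs : f s = f t₀ := hfs
  have hft : max (f a) (f b) < f t₀ := hlt.trans_le (hmax ht)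
  have has : a < s := hs.1.lt_of_ne fun h => by
    rw [← h] at hfs; linarith [le_max_left (f a) (f b)]
  have hsb : s < b := hs.2.lt_of_ne fun h => by
    rw [h] at hfs; linarith [le_max_right (f a) (f b)]
  set ε := min (s - a) (b - s)
  have hε : 0 < ε := lt_min (by linarith) (by linarith)
  have hl : s - ε ∈ Icc a b := ⟨by linarith [min_le_left (s - a) (b - s)], by linarith⟩
  have hr : s + ε ∈ Icc a b := ⟨by linarith, by linarith [min_le_right (s - a) (b - s)]⟩
  have hfl : f (s - ε) < f t₀ :=
    (hmax hl).lt_of_ne fun h => by linarith [hleast ⟨hl, (h : f (s - ε) = f t₀)⟩]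
  have hfr : f (s + ε) ≤ f t₀ := hmax hr
  linarith [hmid s ε hε hl hr]

section CAT0

variable {X : Type*} [MetricSpace X]

def IsMidpoint (x y m : X) : Prop :=
  dist x m = dist x y / 2 ∧ dist y m = dist x y / 2

theorem IsMidpoint.symm {x y m : X} (h : IsMidpoint x y m) : IsMidpoint y x m := by
  rw [IsMidpoint, dist_comm y x]
  exact And.symm h

theorem IsGeodesicOn.isMidpoint {γ : ℝ → X} {L s ε : ℝ} (h : IsGeodesicOn γ (Icc 0 L))
    (hε : 0 ≤ ε) (hl : s - ε ∈ Icc 0 L) (hr : s + ε ∈ Icc 0 L) :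
    IsMidpoint (γ (s - ε)) (γ (s + ε)) (γ s) := by
  have hs : s ∈ Icc 0 L := ⟨by linarith [hl.1], by linarith [hr.2]⟩
  rw [IsMidpoint, dist_comm (γ (s + ε)), h.dist_eq_sub hl hs (by linarith),
    h.dist_eq_sub hs hr (by linarith), h.dist_eq_sub hl hr (by linarith)]
  constructor <;> ring

theorem GeodesicSpace.exists_isMidpoint (hX : GeodesicSpace X) (x y : X) :
    ∃ m, IsMidpoint x y m := by
  obtain ⟨γ, hd, h0, h1, hγ⟩ := hX x y
  refine ⟨γ (dist x y / 2), ?_⟩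
  simpa [h0, h1] using hγ.isMidpoint (s := dist x y / 2) (ε := dist x y / 2) (by linarith)
    ⟨by linarith, by linarith⟩ ⟨by linarith, by linarith⟩

variable {a b a' b' m m' : X}

theorem CAT0.dist_midpoint_midpoint_le_half (hX : CAT0 X) (hm : IsMidpoint a b m)
    (hm' : IsMidpoint a b' m') : dist m m' ≤ dist b b' / 2 := by
  have h₁ := hX.2 m' a b m hm.1 hm.2
  have h₂ := hX.2 b a b' m' hm'.1 hm'.2
  rw [dist_comm m' a, hm'.1, dist_comm m' b] at h₁
  rw [dist_comm b a] at h₂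
  have : dist m' m ^ 2 ≤ (dist b b' / 2) ^ 2 := by nlinarith
  rw [dist_comm]
  exact (pow_le_pow_iff_left₀ dist_nonneg (by positivity) two_ne_zero).1 this

theorem CAT0.dist_midpoint_midpoint_le (hX : CAT0 X) (hm : IsMidpoint a b m)
    (hm' : IsMidpoint a' b' m') : dist m m' ≤ (dist a a' + dist b b') / 2 := by
  obtain ⟨n, hn⟩ := hX.1.exists_isMidpoint a b'
  have h₁ := hX.dist_midpoint_midpoint_le_half hm hn
  have h₂ := hX.dist_midpoint_midpoint_le_half hn.symm hm'.symm
  linarith [dist_triangle m n m']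

end CAT0

section FellowTravel

variable {X : Type*} [MetricSpace X] {σ τ : ℝ → X} {L t D δ : ℝ}

theorem CAT0.dist_le_max_of_isGeodesicOn (hX : CAT0 X) (hσ : IsGeodesicOn σ (Icc 0 L))
    (hτ : IsGeodesicOn τ (Icc 0 L)) (ht : t ∈ Icc 0 L) :
    dist (σ t) (τ t) ≤ max (dist (σ 0) (τ 0)) (dist (σ L) (τ L)) :=
  le_max_of_forall_le_midpoint (f := fun s => dist (σ s) (τ s))
    (continuous_dist.comp_continuousOn (hσ.continuousOn.prodMk hτ.continuousOn))
    (fun _ _ hε hl hr => hX.dist_midpoint_midpoint_le (hσ.isMidpoint hε.le hl hr)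
      (hτ.isMidpoint hε.le hl hr)) ht

theorem GromovHyperbolic.exists_dist_le_of_quadrilateral (hG : GeodesicSpace X)
    (hδ : GromovHyperbolic X δ) {x y y' x' : X} {σ e τ η : ℝ → X}
    (hσ : IsGeodesicSegment σ 0 (dist x y) x y) (he : IsGeodesicSegment e 0 (dist y y') y y')
    (hτ : IsGeodesicSegment τ 0 (dist y' x') y' x')
    (hη : IsGeodesicSegment η 0 (dist x' x) x' x)
    {s : ℝ} (hs : s ∈ Icc 0 (dist x y)) :
    ∃ p ∈ e '' Icc 0 (dist y y') ∪ τ '' Icc 0 (dist y' x') ∪ η '' Icc 0 (dist x' x),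
      dist (σ s) p ≤ 2 * δ := by
  obtain ⟨β, hβ⟩ := hG x' y
  obtain ⟨p, hp | hp, hsp⟩ := hδ.2 x y x' σ _ η hσ hβ.reverse hη s hs
  · obtain ⟨r, hr, rfl⟩ := hp
    rw [dist_comm y x'] at hr
    beta_reduce at hsp
    obtain ⟨q, hq, hpq⟩ :=
      hδ.2 x' y y' β e τ hβ he hτ (dist x' y - r) ⟨by linarith [hr.2], by linarith [hr.1]⟩
    exact ⟨q, Or.inl hq, by linarith [dist_triangle (σ s) (β (dist x' y - r)) q]⟩
  · exact ⟨p, Or.inr hp, by linarith [hδ.1]⟩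

theorem GromovHyperbolic.dist_le_of_isGeodesicOn (hG : GeodesicSpace X)
    (hδ : GromovHyperbolic X δ) (hσ : IsGeodesicOn σ (Icc 0 L)) (hτ : IsGeodesicOn τ (Icc 0 L))
    (h₀ : dist (σ 0) (τ 0) ≤ D) (h₁ : dist (σ L) (τ L) ≤ D) (ht : t ∈ Icc 0 L) :
    dist (σ t) (τ t) ≤ 3 * D + 4 * δ := by
  have hL : 0 ≤ L := ht.1.trans ht.2
  have hL' : L ∈ Icc 0 L := ⟨hL, le_rfl⟩
  have hσt := hσ.dist_zero_eq ht
  have hτt := hτ.dist_zero_eq ht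
  have hσL := hσ.dist_endpoint_eq ht
  have hτL := hτ.dist_endpoint_eq ht
  have hτ0 := hτ.dist_zero_eq hL'
  obtain ⟨e, he⟩ := hG (σ L) (τ L)
  obtain ⟨η, hη⟩ := hG (τ 0) (σ 0)
  -- `p` lies on `[σ L, τ L]`, on `τ`, or on `[τ 0, σ 0]`
  obtain ⟨p, (hp | ⟨r, hr, rfl⟩) | hp, hp_near⟩ :=
    hδ.exists_dist_le_of_quadrilateral hG (hσ.isGeodesicSegment hL) he
      (hτ.isGeodesicSegment hL).reverse hη (s := t) (by rwa [hσ.dist_zero_eq hL'])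
  · have := (he.dist_le_of_mem_image hp).1
    linarith [dist_triangle4 (σ t) (σ L) (τ L) (τ t), dist_triangle (σ t) p (σ L),
      dist_comm (σ L) p, dist_comm (τ L) (τ t), dist_nonneg (x := σ 0) (y := τ 0)]
  · rw [dist_comm (τ L), hτ0] at hr
    rw [hτ0] at hp_near
    have hu : L - r ∈ Icc 0 L := ⟨by linarith [hr.2], by linarith [hr.1]⟩
    have hτu := hτ.dist_zero_eq hu
    have hut : |L - r - t| ≤ D + 2 * δ := abs_sub_le_iff.2
      ⟨by linarith [dist_triangle4 (τ 0) (σ 0) (σ t) (τ (L - r)), dist_comm (τ 0) (σ 0)],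
        by linarith [dist_triangle4 (σ 0) (τ 0) (τ (L - r)) (σ t), dist_comm (τ (L - r)) (σ t)]⟩
    linarith [dist_triangle (σ t) (τ (L - r)) (τ t), hτ (L - r) hu t ht,
      dist_nonneg (x := σ 0) (y := τ 0)]
  · have := (hη.dist_le_of_mem_image hp).2
    linarith [dist_triangle4 (σ t) (σ 0) (τ 0) (τ t), dist_triangle (σ 0) p (σ t),
      dist_comm (σ 0) p, dist_comm (σ t) p, dist_comm (σ t) (σ 0), dist_comm (τ 0) (σ 0)]

theorem NPCSpace.exists_dist_le_of_isGeodesicOn (hX : NPCSpace X) (D : ℝ) :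
    ∃ C : ℝ, ∀ {L : ℝ} {σ τ : ℝ → X}, IsGeodesicOn σ (Icc 0 L) → IsGeodesicOn τ (Icc 0 L) →
      dist (σ 0) (τ 0) ≤ D → dist (σ L) (τ L) ≤ D → ∀ t ∈ Icc 0 L, dist (σ t) (τ t) ≤ C := by
  rcases hX.2 with ⟨-, hcat⟩ | ⟨-, δ, hδ⟩
  · exact ⟨D, fun hσ hτ h₀ h₁ t ht =>
      (hcat.dist_le_max_of_isGeodesicOn hσ hτ ht).trans (max_le h₀ h₁)⟩
  · exact ⟨3 * D + 4 * δ, fun hσ hτ h₀ h₁ t ht =>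
      hδ.dist_le_of_isGeodesicOn hX.1 hσ hτ h₀ h₁ ht⟩

end FellowTravel

section EndStabilizer

variable {X G : Type*} [MetricSpace X] [Group G] [MulAction G X] {γ : ℝ → X}

theorem mem_endStabilizer_of_forall_dist_le (hX : NPCSpace X) (hiso : IsometricAction G X)
    {h a : G} (hγ : AttractsTo h γ) {D : ℝ}
    (hD : ∀ n : ℕ, dist (a • h ^ n • γ 0) (h ^ n • γ 0) ≤ D) :
    a ∈ endStabilizer hiso γ := by
  obtain ⟨C, hC⟩ := hX.exists_dist_le_of_isGeodesicOn D
  obtain ⟨hfar, C', hclose⟩ := hγ.2 (γ 0)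
  choose σ hσ using fun n : ℕ => hX.1 (γ 0) (h ^ n • γ 0)
  refine ⟨C' + C + C', fun t ht => ?_⟩
  obtain ⟨n, hσγ, htn⟩ := ((hclose t ht σ hσ).and (hfar.eventually_ge_atTop t)).exists
  obtain ⟨-, hσ0, hσn, hσgeo⟩ := hσ n
  have hmove : dist (σ n t) (a • σ n t) ≤ C :=
    hC hσgeo (fun u hu v hv => ((hiso a).dist_eq _ _).trans (hσgeo u hu v hv))
      (by simpa [hσ0, dist_comm] using hD 0) (by simpa [hσn, dist_comm] using hD n)
      t ⟨ht, htn⟩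
  calc dist (a • γ t) (γ t)
      ≤ dist (a • γ t) (a • σ n t) + dist (a • σ n t) (σ n t) + dist (σ n t) (γ t) :=
        dist_triangle4 _ _ _ _
    _ ≤ C' + C + C' := by
        rw [(hiso a).dist_eq, dist_comm (γ t), dist_comm (a • σ n t)]
        linarith


theorem Uplus_le_endStabilizer [TopologicalSpace G] [ContinuousSMul G X] (hX : NPCSpace X)
    (hiso : IsometricAction G X) {g : G} (hγ : AttractsTo g γ) {V : Subgroup G}
    (hV : IsCompact (V : Set G)) : Uplus g V ≤ endStabilizer hiso γ := by
  obtain ⟨D, hD⟩ := (hV.image (f := fun v : G => dist (v • γ 0) (γ 0)) (by fun_prop)).bddAbove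
  refine fun a ha => mem_endStabilizer_of_forall_dist_le hX hiso hγ (D := D) fun n => ?_
  have hv := mem_Uplus_iff.1 ha n n.cast_nonneg
  rw [zpow_natCast] at hv
  calc dist (a • g ^ n • γ 0) (g ^ n • γ 0)
      = dist (((g ^ n)⁻¹ * a * g ^ n) • γ 0) (γ 0) := by
        rw [← (hiso (g ^ n)).dist_eq (((g ^ n)⁻¹ * a * g ^ n) • γ 0)]
        simp [smul_smul, mul_assoc]
    _ ≤ D := hD ⟨_, hv, rfl⟩

end EndStabilizer

theorem product_of_end_fixators_nhds_general
    {X G : Type*} [MetricSpace X] [Group G] [TopologicalSpace G]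
    [IsTopologicalGroup G] [LocallyCompactSpace G] [TotallyDisconnectedSpace G] [T2Space G]
    [MulAction G X] [ContinuousSMul G X]
    (hNPC : NPCSpace X) (hiso : IsometricAction G X)
    (g : G) (γp γm : ℝ → X)
    (hattr : AttractsTo g γp) (hrep : AttractsTo g⁻¹ γm)
    (U : Subgroup G) (hU : IsOpen (U : Set G)) :
    ((U ⊓ endStabilizer hiso γp : Subgroup G) : Set G) *
      ((U ⊓ endStabilizer hiso γm : Subgroup G) : Set G) ∈ 𝓝 (1 : G) := by
  obtain ⟨V, hVc, hVo, hVU⟩ := exists_isCompact_isOpen_subgroup_subset (hU.mem_nhds U.one_mem)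
  obtain ⟨O, hO, hOV⟩ := exists_isOpen_subgroup_subset_Uplus_mul_Uminus (g := g) hVo hVc
  refine Filter.mem_of_superset (hO.mem_nhds O.one_mem) (hOV.trans (Set.mul_subset_mul ?_ ?_))
  · exact le_inf (Uplus_le_self.trans hVU) (Uplus_le_endStabilizer hNPC hiso hattr hVc)
  · rw [Uminus_eq_Uplus_inv]
    exact le_inf (Uplus_le_self.trans hVU) (Uplus_le_endStabilizer hNPC hiso hrep hVc)

/-- For an open subgroup `U` of `G` and a hyperbolic `g ∈ G` with
attracting point `ξ₊` (ray `γp`) and repelling point `ξ₋` (ray `γm`), the product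
`U_{ξ₊}U_{ξ₋} = (U ∩ G_{ξ₊})(U ∩ G_{ξ₋})` is a neighbourhood of the identity. -/
theorem product_of_end_fixators_nhds
    {X G : Type*} [MetricSpace X] [Group G] [TopologicalSpace G]
    [IsTopologicalGroup G] [LocallyCompactSpace G] [TotallyDisconnectedSpace G] [T2Space G]
    [MulAction G X] [ContinuousSMul G X]
    (hNPC : NPCSpace X) (hiso : IsometricAction G X) (hproper : ProperAction G X)
    (g : G) (hhyp : IsHyperbolicIsom X g) (γp γm : ℝ → X)
    (hattr : AttractsTo g γp) (hrep : AttractsTo g⁻¹ γm)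
    (U : Subgroup G) (hU : IsOpen (U : Set G)) :
    ((U ⊓ endStabilizer hiso γp : Subgroup G) : Set G) *
      ((U ⊓ endStabilizer hiso γm : Subgroup G) : Set G) ∈ 𝓝 (1 : G) :=
  product_of_end_fixators_nhds_general hNPC hiso g γp γm hattr hrep U hU
end

section
/- Let X be an NPC space, let x ∈ X, and let g and h be isometries of X, with g hyperbolic and attracting point ξ. Then h stabilizes ξ if and only if the sequence rₙ = d(hgⁿx, gⁿx) is bounded over all n ≥ 0. Moreover, if h stabilizes ξ, then there exist a constant c_{g,x} (independent of h) and n₀ ∈ ℕ such that d(hgⁿx, gⁿx) ≤ d(hx, x) + c_{g,x} for all n ≥ n₀, where for fixed (g, x), n₀ can be bounded by a function of d(hx, x) of linear growth. -/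
open Filter Set Topology Pointwise MeasureTheory

/-
In both kinds of NPC space three facts hold: the orbit `gⁿx` tracks the attracting ray `γ`
(it stays boundedly close to `γ (d(γ 0, gⁿx))`), it escapes linearly, and asymptotic geodesic
rays end up within a constant `c` of their initial distance. Then the displacement of `h` along the
orbit equals its displacement along `γ` up to a constant. If `h` stabilizes `ξ`, the latter is at
most `d(hγ 0, γ 0) + c ≤ d(hx, x) + c'` once the orbit is beyond distance `c + d(hγ 0, γ 0)`, which
takes linearly many steps in `d(hx, x)`. Conversely a bounded displacement along the orbit bounds
the displacement along `γ`, as consecutive orbit points are `d(x, gx)` apart.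

In a CAT(0) space the distance between geodesics is convex, so `c = 0`, and the first two facts
come from the axis of `g`. In a `δ`-hyperbolic space the third fact follows from thin triangles and
tracking from the Morse lemma for the quasi-geodesic orbit.
-/

namespace IsGeodesicSegment

variable {X : Type*} [MetricSpace X] {γ : ℝ → X} {A : ℝ} {x y : X}

lemma dist_apply (h : IsGeodesicSegment γ 0 A x y) {u v : ℝ} (hu : u ∈ Icc 0 A)
    (hv : v ∈ Icc 0 A) : dist (γ u) (γ v) = |u - v| :=
  h.2.2.2 u hu v hv

lemma dist_left (h : IsGeodesicSegment γ 0 A x y) {u : ℝ} (hu : u ∈ Icc 0 A) :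
    dist x (γ u) = u := by
  rw [← h.2.1, h.dist_apply (left_mem_Icc.2 h.1) hu, zero_sub, abs_neg, abs_of_nonneg hu.1]

lemma dist_right (h : IsGeodesicSegment γ 0 A x y) {u : ℝ} (hu : u ∈ Icc 0 A) :
    dist (γ u) y = A - u := by
  rw [← h.2.2.1, h.dist_apply hu (right_mem_Icc.2 h.1), abs_of_nonpos (by linarith [hu.2]),
    neg_sub]

lemma dist_eq (h : IsGeodesicSegment γ 0 A x y) : dist x y = A := by
  simpa [h.2.2.1] using h.dist_left (right_mem_Icc.2 h.1)

lemma isGeodesicSegment_dist (h : IsGeodesicSegment γ 0 A x y) :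
    IsGeodesicSegment γ 0 (dist x y) x y := by
  rwa [h.dist_eq]

lemma reverse_s17 (h : IsGeodesicSegment γ 0 A x y) :
    IsGeodesicSegment (fun t => γ (A - t)) 0 A y x := by
  refine ⟨h.1, by simpa using h.2.2.1, by simpa using h.2.1, fun u hu v hv => ?_⟩
  rw [h.dist_apply ⟨by linarith [hu.2], by linarith [hu.1]⟩
    ⟨by linarith [hv.2], by linarith [hv.1]⟩, show A - u - (A - v) = -(u - v) by ring, abs_neg]

lemma subsegment (h : IsGeodesicSegment γ 0 A x y) {s₁ s₂ : ℝ} (h₁ : 0 ≤ s₁) (h₁₂ : s₁ ≤ s₂)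
    (h₂ : s₂ ≤ A) : IsGeodesicSegment (fun t => γ (t + s₁)) 0 (s₂ - s₁) (γ s₁) (γ s₂) := by
  refine ⟨by linarith, by simp, by simp, fun u hu v hv => ?_⟩
  rw [h.dist_apply ⟨by linarith [hu.1], by linarith [hu.2]⟩
    ⟨by linarith [hv.1], by linarith [hv.2]⟩, add_sub_add_right_eq_sub]

lemma continuousOn (h : IsGeodesicSegment γ 0 A x y) : ContinuousOn γ (Icc 0 A) :=
  (LipschitzOnWith.of_dist_le_mul (K := 1) fun u hu v hv => by
    rw [h.dist_apply hu hv, NNReal.coe_one, one_mul, Real.dist_eq]).continuousOn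

lemma dist_midpoint (h : IsGeodesicSegment γ 0 A x y) {u v : ℝ} (hu : u ∈ Icc 0 A)
    (hv : v ∈ Icc 0 A) :
    dist (γ u) (γ ((u + v) / 2)) = dist (γ u) (γ v) / 2 ∧
      dist (γ v) (γ ((u + v) / 2)) = dist (γ u) (γ v) / 2 := by
  have hm : (u + v) / 2 ∈ Icc 0 A := ⟨by linarith [hu.1, hv.1], by linarith [hu.2, hv.2]⟩
  rw [h.dist_apply hu hm, h.dist_apply hv hm, h.dist_apply hu hv,
    show u - (u + v) / 2 = (u - v) / 2 by ring, show v - (u + v) / 2 = -((u - v) / 2) by ring,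
    abs_neg, abs_div, abs_two]
  exact ⟨rfl, rfl⟩

lemma dist_add_dist_le (h : IsGeodesicSegment γ 0 A x y) {v : ℝ} (hv : v ∈ Icc 0 A) (z : X) :
    dist z x + dist z y ≤ 2 * dist z (γ v) + A := by
  have h₁ := dist_triangle z (γ v) x
  have h₂ := dist_triangle z (γ v) y
  rw [dist_comm (γ v) x, h.dist_left hv] at h₁
  rw [h.dist_right hv] at h₂
  linarith

lemma dist_apply_dist_le (h : IsGeodesicSegment γ 0 A x y) {p : X} {u r : ℝ}
    (hu : u ∈ Icc 0 A) (hpu : dist p (γ u) ≤ r) (hpA : dist x p ≤ A) :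
    dist p (γ (dist x p)) ≤ 2 * r := by
  have hmem : dist x p ∈ Icc 0 A := ⟨dist_nonneg, hpA⟩
  have hdiff : |u - dist x p| ≤ r := by
    have := abs_dist_sub_le (γ u) p x
    rw [dist_comm (γ u) x, h.dist_left hu, dist_comm (γ u) p, dist_comm p x] at this
    linarith
  calc dist p (γ (dist x p)) ≤ dist p (γ u) + dist (γ u) (γ (dist x p)) := dist_triangle _ _ _
    _ ≤ 2 * r := by rw [h.dist_apply hu hmem]; linarith

end IsGeodesicSegment

section Geodesics

variable {X : Type*} [MetricSpace X] {γ : ℝ → X}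

lemma IsGeodesicRay.isGeodesicSegment (h : IsGeodesicRay γ) {T : ℝ} (hT : 0 ≤ T) :
    IsGeodesicSegment γ 0 T (γ 0) (γ T) :=
  ⟨hT, rfl, rfl, fun u hu v hv => h u hu.1 v hv.1⟩

lemma IsGeodesicRay.map {Y : Type*} [MetricSpace Y] {f : X → Y} (hf : Isometry f)
    (h : IsGeodesicRay γ) : IsGeodesicRay (fun t => f (γ t)) :=
  fun u hu v hv => by rw [hf.dist_eq, h u hu v hv]

lemma IsGeodesicLine.isGeodesicRay (h : IsGeodesicLine γ) : IsGeodesicRay γ :=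
  fun u _ v _ => h u trivial v trivial

end Geodesics

section IsometricAction

variable {X G : Type*} [MetricSpace X] [Group G] [MulAction G X]

lemma IsometricAction.dist_smul (hiso : IsometricAction G X) (h : G) (a b : X) :
    dist (h • a) (h • b) = dist a b :=
  (hiso h).dist_eq a b

lemma IsometricAction.dist_smul_self_le (hiso : IsometricAction G X) (h : G) (a b : X) :
    dist (h • a) a ≤ dist (h • b) b + 2 * dist a b := by
  calc dist (h • a) a ≤ dist (h • a) (h • b) + dist (h • b) b + dist b a := dist_triangle4 _ _ _ _
    _ = dist (h • b) b + 2 * dist a b := by rw [hiso.dist_smul, dist_comm b a]; ring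

lemma IsometricAction.dist_pow_smul_succ (hiso : IsometricAction G X) (g : G) (x : X) (j : ℕ) :
    dist (g ^ j • x) (g ^ (j + 1) • x) = dist x (g • x) := by
  rw [pow_succ, mul_smul, hiso.dist_smul]

end IsometricAction

lemma exists_le_le_add_of_tendsto {u : ℕ → ℝ} {κ : ℝ} (hu : Tendsto u atTop atTop)
    (hstep : ∀ n, u (n + 1) ≤ u n + κ) (hκ : 0 ≤ κ) {N : ℕ} {t : ℝ} (ht : u N ≤ t) :
    ∃ n, N ≤ n ∧ t ≤ u n ∧ u n ≤ t + κ := by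
  have hex : ∃ m, t ≤ u (N + m) := by
    obtain ⟨n, hnt, hn⟩ := ((hu.eventually_ge_atTop t).and (eventually_ge_atTop N)).exists
    exact ⟨n - N, by rwa [Nat.add_sub_cancel' hn]⟩
  classical
  refine ⟨N + Nat.find hex, Nat.le_add_right _ _, Nat.find_spec hex, ?_⟩
  rcases h : Nat.find hex with _ | m
  · rw [add_zero]; linarith
  · have hm : u (N + m) < t := not_le.1 (Nat.find_min hex (by omega))
    rw [← add_assoc]
    linarith [hstep (N + m)]

lemma le_chord_of_midpoint_le {f : ℝ → ℝ} (hf : ContinuousOn f (Icc 0 1))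
    (hmid : ∀ u ∈ Icc (0 : ℝ) 1, ∀ v ∈ Icc (0 : ℝ) 1, f ((u + v) / 2) ≤ (f u + f v) / 2) :
    ∀ s ∈ Icc (0 : ℝ) 1, f s ≤ (1 - s) * f 0 + s * f 1 := by
  set g : ℝ → ℝ := fun s => f s - ((1 - s) * f 0 + s * f 1)
  have hg : ContinuousOn g (Icc 0 1) := hf.sub (by fun_prop)
  have hgmid : ∀ u ∈ Icc (0 : ℝ) 1, ∀ v ∈ Icc (0 : ℝ) 1, g ((u + v) / 2) ≤ (g u + g v) / 2 :=
    fun u hu v hv => by simp only [g]; linarith [hmid u hu v hv]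
  have hg0 : g 0 = 0 := by simp [g]
  have hg1 : g 1 = 0 := by simp [g]
  obtain ⟨m, hm, hmax⟩ := isCompact_Icc.exists_isMaxOn (nonempty_Icc.2 zero_le_one) hg
  -- Reflecting the maximum point through the nearer endpoint gives `g m ≤ g m / 2`.
  have hgm : g m ≤ 0 := by
    rcases le_total m (1 - m) with hle | hle
    · have h := hgmid 0 (left_mem_Icc.2 zero_le_one) (2 * m) ⟨by linarith [hm.1], by linarith⟩
      rw [show (0 + 2 * m) / 2 = m by ring, hg0] at h
      linarith [isMaxOn_iff.1 hmax (2 * m) ⟨by linarith [hm.1], by linarith⟩]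
    · have h := hgmid (2 * m - 1) ⟨by linarith, by linarith [hm.2]⟩ 1 (right_mem_Icc.2 zero_le_one)
      rw [show (2 * m - 1 + 1) / 2 = m by ring, hg1] at h
      linarith [isMaxOn_iff.1 hmax (2 * m - 1) ⟨by linarith, by linarith [hm.2]⟩]
  intro s hs
  have := (isMaxOn_iff.1 hmax s hs).trans hgm
  simp only [g] at this
  linarith

lemma Nat.two_pow_clog_le (M : ℕ) : 2 ^ Nat.clog 2 M ≤ 2 * M + 1 := by
  rcases le_or_gt M 1 with hM | hM
  · rw [Nat.clog_of_right_le_one hM]; omega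
  · have h := Nat.pow_pred_clog_lt_self one_lt_two hM
    have hpos := Nat.clog_pos one_lt_two hM
    rw [← Nat.succ_pred_eq_of_pos hpos, pow_succ]
    omega

lemma exists_forall_le_of_two_pow_le (p q : ℝ) :
    ∃ k₀ : ℕ, ∀ k : ℕ, (2 : ℝ) ^ k ≤ p + q * k → k ≤ k₀ := by
  have hlin : (fun k : ℕ => p + q * k) =o[atTop] fun k => (2 : ℝ) ^ k := by
    have hpow := isLittleO_pow_const_const_pow_of_one_lt (R := ℝ) 1 one_lt_two
    simp only [pow_one] at hpow
    refine Asymptotics.IsLittleO.add ?_ (hpow.const_mul_left q)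
    rw [Asymptotics.isLittleO_const_left]
    refine Or.inr ((tendsto_pow_atTop_atTop_of_one_lt (one_lt_two (α := ℝ))).congr fun k => ?_)
    simp
  obtain ⟨k₀, hk₀⟩ := eventually_atTop.1 (hlin.bound (by norm_num : (0 : ℝ) < 1 / 2))
  refine ⟨k₀, fun k hk => le_of_not_gt fun hlt => ?_⟩
  have := hk₀ k hlt.le
  rw [Real.norm_eq_abs, Real.norm_of_nonneg (by positivity)] at this
  linarith [le_abs_self (p + q * k), pow_pos (two_pos : (0 : ℝ) < 2) k]

lemma Nat.cast_sub_add_sub (i j : ℕ) : ((i - j + (j - i) : ℕ) : ℝ) = |(i : ℝ) - j| := by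
  rcases le_total i j with h | h
  · rw [Nat.sub_eq_zero_of_le h, zero_add, Nat.cast_sub h, abs_sub_comm,
      abs_of_nonneg (by simpa using h)]
  · rw [Nat.sub_eq_zero_of_le h, add_zero, Nat.cast_sub h, abs_of_nonneg (by simpa using h)]

section StabilizerCriterion

variable {X G : Type*} [MetricSpace X] [Group G] [MulAction G X]

def AsymptoticRaysFellowTravel (X : Type*) [MetricSpace X] (c : ℝ) : Prop :=
  ∀ γ₁ γ₂ : ℝ → X, IsGeodesicRay γ₁ → IsGeodesicRay γ₂ → AsympRays γ₁ γ₂ →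
    ∀ t, c + dist (γ₁ 0) (γ₂ 0) < t → dist (γ₁ t) (γ₂ t) ≤ dist (γ₁ 0) (γ₂ 0) + c

def OrbitTracksRay (g : G) (γ : ℝ → X) (x : X) : Prop :=
  ∃ K : ℝ, ∀ᶠ n : ℕ in atTop, dist (g ^ n • x) (γ (dist (γ 0) (g ^ n • x))) ≤ K

def OrbitEscapesLinearly (g : G) (o x : X) : Prop :=
  ∃ k b : ℝ, 0 < k ∧ 0 ≤ b ∧ ∀ n : ℕ, k * n - b ≤ dist o (g ^ n • x)

lemma OrbitEscapesLinearly.tendsto {g : G} {o x : X} (h : OrbitEscapesLinearly g o x) :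
    Tendsto (fun n : ℕ => dist o (g ^ n • x)) atTop atTop := by
  obtain ⟨k, b, hk, -, hesc⟩ := h
  refine tendsto_atTop_mono hesc (tendsto_atTop_add_const_right _ _ ?_)
  exact (tendsto_natCast_atTop_atTop).const_mul_atTop hk

variable (hiso : IsometricAction G X) {g : G} {γ : ℝ → X} {x : X}
include hiso

lemma exists_dist_smul_orbit_le_of_asympRays {c : ℝ} (hc : 0 ≤ c) (hγ : IsGeodesicRay γ)
    (hrays : AsymptoticRaysFellowTravel X c) (htrack : OrbitTracksRay g γ x)
    (hesc : OrbitEscapesLinearly g (γ 0) x) :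
    ∃ c' A B : ℝ, 0 ≤ A ∧ 0 ≤ B ∧ ∀ h : G, AsympRays (fun t => h • γ t) γ →
      ∃ n₀ : ℕ, (n₀ : ℝ) ≤ A * dist (h • x) x + B ∧
        ∀ n : ℕ, n₀ ≤ n → dist (h • (g ^ n • x)) (g ^ n • x) ≤ dist (h • x) x + c' := by
  obtain ⟨K, hK⟩ := htrack
  obtain ⟨N, hN⟩ := eventually_atTop.1 hK
  obtain ⟨k, b, hk, hb, hesc⟩ := hesc
  set D₀ := dist x (γ 0)
  refine ⟨2 * K + c + 2 * D₀, 1 / k, N + (c + 2 * D₀ + b) / k + 2, by positivity,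
    by positivity, fun h hh => ?_⟩
  set d := dist (h • x) x
  set z := (c + d + 2 * D₀ + b) / k
  have hz : 0 ≤ z := by positivity
  refine ⟨N + ⌈z⌉₊ + 1, ?_, fun n hn => ?_⟩
  · have : z = 1 / k * d + (c + 2 * D₀ + b) / k := by simp only [z]; field_simp; ring
    push_cast
    linarith [Nat.ceil_lt_add_one hz]
  set t := dist (γ 0) (g ^ n • x)
  have he : dist (h • γ 0) (γ 0) ≤ d + 2 * D₀ := by
    have := hiso.dist_smul_self_le h (γ 0) x
    rwa [dist_comm (γ 0) x] at this
  have ht : c + dist (h • γ 0) (γ 0) < t := by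
    have h1 : z + 1 ≤ n := by
      have : (⌈z⌉₊ : ℝ) + 1 ≤ n := by exact_mod_cast (by omega : ⌈z⌉₊ + 1 ≤ n)
      linarith [Nat.le_ceil z]
    have h2 : k * z = c + d + 2 * D₀ + b := by simp only [z]; field_simp
    nlinarith [hesc n]
  have hray := hrays _ _ (hγ.map (hiso h)) hγ hh t ht
  calc dist (h • (g ^ n • x)) (g ^ n • x)
      ≤ dist (h • γ t) (γ t) + 2 * dist (g ^ n • x) (γ t) := hiso.dist_smul_self_le _ _ _
    _ ≤ (dist (h • γ 0) (γ 0) + c) + 2 * K := by gcongr; exact hN n (by omega)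
    _ ≤ d + (2 * K + c + 2 * D₀) := by linarith

lemma asympRays_of_dist_smul_orbit_le (hγ : IsGeodesicRay γ) (htrack : OrbitTracksRay g γ x)
    (hesc : OrbitEscapesLinearly g (γ 0) x) {h : G} {C₀ : ℝ}
    (hC₀ : ∀ n : ℕ, dist (h • (g ^ n • x)) (g ^ n • x) ≤ C₀) :
    AsympRays (fun t => h • γ t) γ := by
  obtain ⟨K, hK⟩ := htrack
  obtain ⟨N, hN⟩ := eventually_atTop.1 hK
  set u := fun n : ℕ => dist (γ 0) (g ^ n • x)
  set κ := dist x (g • x)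
  have hstep : ∀ n, u (n + 1) ≤ u n + κ := fun n => by
    calc u (n + 1) ≤ u n + dist (g ^ n • x) (g ^ (n + 1) • x) := dist_triangle _ _ _
      _ = u n + κ := by rw [hiso.dist_pow_smul_succ]
  refine ⟨C₀ + 2 * K + 2 * (u N + κ), fun t ht => ?_⟩
  obtain ⟨n, hNn, hn, hnκ⟩ := exists_le_le_add_of_tendsto hesc.tendsto hstep dist_nonneg
    (le_max_right t (u N))
  have hun : 0 ≤ u n := dist_nonneg
  have hdist : dist (γ t) (γ (u n)) ≤ u N + κ := by
    rw [hγ t ht _ hun, abs_le]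
    constructor <;> linarith [le_max_left t (u N), max_le_add_of_nonneg ht (dist_nonneg : 0 ≤ u N)]
  calc dist (h • γ t) (γ t)
      ≤ dist (h • γ (u n)) (γ (u n)) + 2 * dist (γ t) (γ (u n)) := hiso.dist_smul_self_le _ _ _
    _ ≤ (dist (h • (g ^ n • x)) (g ^ n • x) + 2 * dist (γ (u n)) (g ^ n • x))
        + 2 * (u N + κ) := by gcongr; exact hiso.dist_smul_self_le _ _ _
    _ ≤ C₀ + 2 * K + 2 * (u N + κ) := by
      gcongr
      · exact hC₀ n
      · rw [dist_comm]; exact hN n hNn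

theorem stabilizer_criterion_of_orbitTracksRay {c : ℝ} (hc : 0 ≤ c) (hγ : IsGeodesicRay γ)
    (hrays : AsymptoticRaysFellowTravel X c) (htrack : OrbitTracksRay g γ x)
    (hesc : OrbitEscapesLinearly g (γ 0) x) :
    (∀ h : G, AsympRays (fun t => h • γ t) γ ↔
      ∃ C : ℝ, ∀ n : ℕ, dist (h • (g ^ n • x)) (g ^ n • x) ≤ C) ∧
    (∃ c A B : ℝ, 0 ≤ A ∧ 0 ≤ B ∧
      ∀ h : G, AsympRays (fun t => h • γ t) γ →
        ∃ n₀ : ℕ, (n₀ : ℝ) ≤ A * dist (h • x) x + B ∧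
          ∀ n : ℕ, n₀ ≤ n → dist (h • (g ^ n • x)) (g ^ n • x) ≤ dist (h • x) x + c) := by
  have hbound := exists_dist_smul_orbit_le_of_asympRays hiso hc hγ hrays htrack hesc
  refine ⟨fun h => ⟨fun hh => ?_, fun hC => ?_⟩, hbound⟩
  · obtain ⟨c', _, _, _, _, hc'⟩ := hbound
    obtain ⟨n₀, -, hn₀⟩ := hc' h hh
    obtain ⟨C, hC⟩ :=
      (isBoundedUnder_of_eventually_le (eventually_atTop.2 ⟨n₀, hn₀⟩)).bddAbove_range
    exact ⟨C, fun n => hC ⟨n, rfl⟩⟩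
  · obtain ⟨C₀, hC₀⟩ := hC
    exact asympRays_of_dist_smul_orbit_le hiso hγ htrack hesc hC₀

end StabilizerCriterion

namespace CAT0

variable {X : Type*} [MetricSpace X] (hX : CAT0 X)
include hX

lemma dist_midpoints_le_of_common_vertex {z y₁ y₂ m₁ m₂ : X}
    (h₁ : dist z m₁ = dist z y₁ / 2) (h₁' : dist y₁ m₁ = dist z y₁ / 2)
    (h₂ : dist z m₂ = dist z y₂ / 2) (h₂' : dist y₂ m₂ = dist z y₂ / 2) :
    dist m₁ m₂ ≤ dist y₁ y₂ / 2 := by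
  have HA := hX.2 y₁ z y₂ m₂ h₂ h₂'
  have HB := hX.2 m₂ z y₁ m₁ h₁ h₁'
  rw [dist_comm m₂ z, h₂, dist_comm m₂ y₁, dist_comm m₂ m₁] at HB
  rw [dist_comm y₁ z] at HA
  rw [← sq_le_sq₀ dist_nonneg (by positivity)]
  nlinarith

lemma dist_midpoints_le {p₁ p₂ q₁ q₂ mp mq : X}
    (hp : dist p₁ mp = dist p₁ p₂ / 2) (hp' : dist p₂ mp = dist p₁ p₂ / 2)
    (hq : dist q₁ mq = dist q₁ q₂ / 2) (hq' : dist q₂ mq = dist q₁ q₂ / 2) :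
    dist mp mq ≤ (dist p₁ q₁ + dist p₂ q₂) / 2 := by
  obtain ⟨σ, hσ⟩ := hX.1 p₂ q₁
  have hR := hσ.dist_midpoint (left_mem_Icc.2 hσ.1) (right_mem_Icc.2 hσ.1)
  rw [hσ.2.1, hσ.2.2.1, zero_add] at hR
  have h₁ : dist mp (σ (dist p₂ q₁ / 2)) ≤ dist p₁ q₁ / 2 :=
    hX.dist_midpoints_le_of_common_vertex (z := p₂) (by rwa [dist_comm p₂ p₁])
      (by rwa [dist_comm p₂ p₁]) hR.1 hR.2
  have h₂ : dist (σ (dist p₂ q₁ / 2)) mq ≤ dist p₂ q₂ / 2 :=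
    hX.dist_midpoints_le_of_common_vertex (z := q₁) (by rw [dist_comm q₁ p₂]; exact hR.2)
      (by rw [dist_comm q₁ p₂]; exact hR.1) hq hq'
  linarith [dist_triangle mp (σ (dist p₂ q₁ / 2)) mq]

theorem dist_le_of_isGeodesicSegment {σ τ : ℝ → X} {A B : ℝ} {p q p' q' : X}
    (hσ : IsGeodesicSegment σ 0 A p q) (hτ : IsGeodesicSegment τ 0 B p' q') {s : ℝ}
    (hs : s ∈ Icc (0 : ℝ) 1) :
    dist (σ (s * A)) (τ (s * B)) ≤ (1 - s) * dist p p' + s * dist q q' := by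
  have hmem : ∀ {C : ℝ}, 0 ≤ C → ∀ s ∈ Icc (0 : ℝ) 1, s * C ∈ Icc 0 C := fun hC s hs =>
    ⟨mul_nonneg hs.1 hC, mul_le_of_le_one_left hC hs.2⟩
  have hcont : ContinuousOn (fun s => dist (σ (s * A)) (τ (s * B))) (Icc 0 1) :=
    continuous_dist.comp_continuousOn <|
      (hσ.continuousOn.comp (by fun_prop) fun s hs => hmem hσ.1 s hs).prodMk
        (hτ.continuousOn.comp (by fun_prop) fun s hs => hmem hτ.1 s hs)
  have hmid : ∀ u ∈ Icc (0 : ℝ) 1, ∀ v ∈ Icc (0 : ℝ) 1,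
      dist (σ ((u + v) / 2 * A)) (τ ((u + v) / 2 * B)) ≤
        (dist (σ (u * A)) (τ (u * B)) + dist (σ (v * A)) (τ (v * B))) / 2 := by
    intro u hu v hv
    have hσm := hσ.dist_midpoint (hmem hσ.1 u hu) (hmem hσ.1 v hv)
    have hτm := hτ.dist_midpoint (hmem hτ.1 u hu) (hmem hτ.1 v hv)
    rw [show (u + v) / 2 * A = (u * A + v * A) / 2 by ring,
      show (u + v) / 2 * B = (u * B + v * B) / 2 by ring]
    exact hX.dist_midpoints_le hσm.1 hσm.2 hτm.1 hτm.2
  have := le_chord_of_midpoint_le hcont hmid s hs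
  simpa [hσ.2.1, hτ.2.1, hσ.2.2.1, hτ.2.2.1] using this

lemma dist_le_of_common_endpoint {σ τ : ℝ → X} {A B : ℝ} {p p' q : X}
    (hσ : IsGeodesicSegment σ 0 A p q) (hτ : IsGeodesicSegment τ 0 B p' q) {t : ℝ}
    (ht : t ∈ Icc 0 A) (htB : t ≤ B) : dist (σ t) (τ t) ≤ 2 * dist p p' := by
  rcases ht.1.eq_or_lt with rfl | htpos
  · rw [hσ.2.1, hτ.2.1]; linarith [dist_nonneg (x := p) (y := p')]
  have hA : 0 < A := htpos.trans_le ht.2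
  have hs : t / A ∈ Icc (0 : ℝ) 1 := ⟨by positivity, (div_le_one hA).2 ht.2⟩
  have hconv := hX.dist_le_of_isGeodesicSegment hσ hτ hs
  rw [div_mul_cancel₀ t hA.ne', dist_self, mul_zero, add_zero] at hconv
  have hlen : |B - A| ≤ dist p p' := by
    simpa [hσ.dist_eq, hτ.dist_eq, abs_sub_comm] using abs_dist_sub_le p p' q
  have hshift : dist (τ (t / A * B)) (τ t) ≤ dist p p' := by
    rw [hτ.dist_apply ⟨mul_nonneg hs.1 hτ.1, mul_le_of_le_one_left hτ.1 hs.2⟩ ⟨ht.1, htB⟩,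
      show t / A * B - t = t / A * (B - A) by field_simp, abs_mul, abs_of_nonneg hs.1]
    exact (mul_le_of_le_one_left (abs_nonneg _) hs.2).trans hlen
  calc dist (σ t) (τ t) ≤ dist (σ t) (τ (t / A * B)) + dist (τ (t / A * B)) (τ t) :=
        dist_triangle _ _ _
    _ ≤ dist p p' + dist p p' := by
        gcongr
        exact hconv.trans (mul_le_of_le_one_left dist_nonneg (by linarith [hs.1]))
    _ = 2 * dist p p' := by ring

/-- The displacement between asymptotic rays is convex and bounded, hence non-increasing. -/
theorem dist_le_of_asympRays {γ₁ γ₂ : ℝ → X} (h₁ : IsGeodesicRay γ₁) (h₂ : IsGeodesicRay γ₂)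
    (h : AsympRays γ₁ γ₂) {t : ℝ} (ht : 0 ≤ t) :
    dist (γ₁ t) (γ₂ t) ≤ dist (γ₁ 0) (γ₂ 0) := by
  obtain ⟨C, hC⟩ := h
  have hlim : Tendsto (fun T => dist (γ₁ 0) (γ₂ 0) + t * C / T) atTop
      (𝓝 (dist (γ₁ 0) (γ₂ 0))) := by
    simpa using tendsto_const_nhds.add ((tendsto_const_nhds (x := t * C)).div_atTop tendsto_id)
  refine ge_of_tendsto hlim (eventually_atTop.2 ⟨max t 1, fun T hTt => ?_⟩)
  have hT : 0 < T := lt_of_lt_of_le one_pos (le_of_max_le_right hTt)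
  have hs : t / T ∈ Icc (0 : ℝ) 1 := ⟨by positivity, (div_le_one hT).2 (le_of_max_le_left hTt)⟩
  have hconv := hX.dist_le_of_isGeodesicSegment (h₁.isGeodesicSegment hT.le)
    (h₂.isGeodesicSegment hT.le) hs
  rw [div_mul_cancel₀ t hT.ne'] at hconv
  calc dist (γ₁ t) (γ₂ t)
      ≤ (1 - t / T) * dist (γ₁ 0) (γ₂ 0) + t / T * dist (γ₁ T) (γ₂ T) := hconv
    _ ≤ dist (γ₁ 0) (γ₂ 0) + t / T * C := by
        gcongr
        · exact mul_le_of_le_one_left dist_nonneg (by linarith [hs.1])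
        · exact hC T hT.le
    _ = dist (γ₁ 0) (γ₂ 0) + t * C / T := by ring

theorem asymptoticRaysFellowTravel : AsymptoticRaysFellowTravel X 0 :=
  fun γ₁ γ₂ h₁ h₂ h t ht => by
    rw [add_zero]
    exact hX.dist_le_of_asympRays h₁ h₂ h (by linarith [dist_nonneg (x := γ₁ 0) (y := γ₂ 0)])

end CAT0

lemma pow_smul_of_translate {X G : Type*} [Group G] [MulAction G X] {g : G} {L : ℝ → X}
    {k : ℝ} (htr : ∀ t, g • L t = L (t + k)) (n : ℕ) (s : ℝ) :
    g ^ n • L s = L (s + n * k) := by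
  induction n with
  | zero => simp
  | succ n ih => rw [pow_succ', mul_smul, ih, htr]; push_cast; ring_nf

section Axis

variable {X G : Type*} [MetricSpace X] [Group G] [MulAction G X] {g : G} {L : ℝ → X} {k : ℝ}

lemma orbitEscapesLinearly_of_translate (hiso : IsometricAction G X) (hL : IsGeodesicLine L)
    (hk : 0 < k) (htr : ∀ t, g • L t = L (t + k)) (o x : X) : OrbitEscapesLinearly g o x := by
  refine ⟨k, dist o (L 0) + dist x (L 0), hk, by positivity, fun n => ?_⟩
  have hLn : dist (L 0) (g ^ n • L 0) = n * k := by
    rw [pow_smul_of_translate htr, zero_add, hL 0 trivial _ trivial, zero_sub, abs_neg,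
      abs_of_nonneg (by positivity)]
  have := dist_dist_dist_le o (g ^ n • x) (L 0) (g ^ n • L 0)
  rw [hiso.dist_smul, hLn, Real.dist_eq, abs_le] at this
  linarith [this.1]

lemma orbitTracksRay_of_translate (hiso : IsometricAction G X) (hL : IsGeodesicLine L)
    (hk : 0 < k) (htr : ∀ t, g • L t = L (t + k)) {γ : ℝ → X} {C : ℝ}
    (hγL : ∀ t, 0 ≤ t → dist (γ t) (L t) ≤ C) (x : X) : OrbitTracksRay g γ x := by
  set Dx := dist x (L 0)
  refine ⟨Dx + (dist (γ 0) (L 0) + Dx) + C, Eventually.of_forall fun n => ?_⟩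
  set t := dist (γ 0) (g ^ n • x)
  have hyn : dist (g ^ n • x) (L (n * k)) = Dx := by
    rw [← zero_add ((n : ℝ) * k), ← pow_smul_of_translate htr, hiso.dist_smul]
  have hgap : dist (L (n * k)) (L t) ≤ dist (γ 0) (L 0) + Dx := by
    have := dist_dist_dist_le (γ 0) (g ^ n • x) (L 0) (L (n * k))
    rw [hyn, hL 0 trivial _ trivial, zero_sub, abs_neg, abs_of_nonneg (by positivity),
      Real.dist_eq] at this
    rwa [hL _ trivial _ trivial, abs_sub_comm]
  calc dist (g ^ n • x) (γ t)
      ≤ dist (g ^ n • x) (L (n * k)) + dist (L (n * k)) (L t) + dist (L t) (γ t) :=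
        dist_triangle4 _ _ _ _
    _ ≤ Dx + (dist (γ 0) (L 0) + Dx) + C := by
        gcongr
        · exact hyn.le
        · rw [dist_comm]; exact hγL t dist_nonneg

/-- Geodesics from `γ 0` to `gⁿ (L 0) = L (n k)` fellow-travel `γ`, and also `L` by convexity. -/
lemma CAT0.exists_dist_ray_axis_le (hX : CAT0 X) (hL : IsGeodesicLine L) (hk : 0 < k)
    (htr : ∀ t, g • L t = L (t + k)) {γ : ℝ → X} (hattr : AttractsTo g γ) :
    ∃ C, ∀ t, 0 ≤ t → dist (γ t) (L t) ≤ C := by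
  obtain ⟨htend, C, hC⟩ := hattr.2 (L 0)
  beta_reduce at htend hC
  choose σ hσ using fun n => hX.1 (γ 0) (g ^ n • L 0)
  set d₀ := dist (γ 0) (L 0)
  refine ⟨C + 2 * d₀, fun t ht => ?_⟩
  obtain ⟨n, hσt, hn⟩ := ((hC t ht σ hσ).and (htend.eventually_ge_atTop (t + d₀))).exists
  have hLn : g ^ n • L 0 = L (n * k) := by rw [pow_smul_of_translate htr, zero_add]
  have hnk : t ≤ n * k := by
    have := dist_triangle (γ 0) (L 0) (L (n * k))
    rw [hL 0 trivial _ trivial, zero_sub, abs_neg, abs_of_nonneg (by positivity), ← hLn] at this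
    linarith
  have hσn := hσ n
  rw [hLn] at hσn hn
  have hclose := hX.dist_le_of_common_endpoint hσn
    (hL.isGeodesicRay.isGeodesicSegment (T := n * k) (by positivity))
    ⟨ht, by linarith [(dist_nonneg : 0 ≤ d₀)]⟩ hnk
  calc dist (γ t) (L t) ≤ dist (γ t) (σ n t) + dist (σ n t) (L t) := dist_triangle _ _ _
    _ ≤ C + 2 * d₀ := by rw [dist_comm]; gcongr

end Axis

namespace GromovHyperbolic

open Metric

variable {X : Type*} [MetricSpace X] {δ : ℝ} (hX : GromovHyperbolic X δ) (hGS : GeodesicSpace X)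
  {y : ℕ → X} {κ r b : ℝ}
include hX hGS

lemma dist_le_of_common_start {α β : ℝ → X} {A B : ℝ} {p q q' : X}
    (hα : IsGeodesicSegment α 0 A p q) (hβ : IsGeodesicSegment β 0 B p q') {u : ℝ}
    (hu : u ∈ Icc 0 B) (huA : u < A - δ - dist q q') :
    dist (α u) (β u) ≤ 2 * δ := by
  have huA' : u ∈ Icc 0 A := ⟨hu.1, by linarith [hX.1, dist_nonneg (x := q) (y := q')]⟩
  obtain ⟨τ, hτ⟩ := hGS q q'
  have hβr : IsGeodesicSegment (fun t => β (B - t)) 0 (dist q' p) q' p := by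
    rw [dist_comm, hβ.dist_eq]; exact hβ.reverse_s17
  obtain ⟨P, hP, hαP⟩ := hX.2 p q q' α τ _ hα.isGeodesicSegment_dist hτ hβr u (by rwa [hα.dist_eq])
  rcases hP with ⟨v, hv, rfl⟩ | ⟨v, hv, rfl⟩
  · -- `α u` cannot be `δ`-close to the far side `[q, q']`
    have h1 := dist_triangle (α u) (τ v) q
    rw [hα.dist_right huA', dist_comm (τ v), hτ.dist_left hv] at h1
    linarith [hv.2]
  · rw [dist_comm q' p, hβ.dist_eq] at hv
    have hw : B - v ∈ Icc 0 B := ⟨by linarith [hv.2], by linarith [hv.1]⟩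
    have hgap : |u - (B - v)| ≤ δ := by
      have := abs_dist_sub_le (α u) (β (B - v)) p
      rw [dist_comm (α u), dist_comm (β (B - v)), hα.dist_left huA', hβ.dist_left hw] at this
      linarith
    calc dist (α u) (β u) ≤ dist (α u) (β (B - v)) + dist (β (B - v)) (β u) := dist_triangle _ _ _
      _ ≤ δ + δ := by rw [hβ.dist_apply hw hu, abs_sub_comm]; gcongr
      _ = 2 * δ := by ring

lemma dist_le_of_common_end {α β : ℝ → X} {A B : ℝ} {p p' q : X}
    (hα : IsGeodesicSegment α 0 A p q) (hβ : IsGeodesicSegment β 0 B p' q) {t : ℝ}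
    (ht : δ + dist p p' < t) (htA : t ≤ A) (htB : t ≤ B) :
    dist (α t) (β t) ≤ 2 * δ + dist p p' := by
  have hAB : |A - B| ≤ dist p p' := by
    simpa [hα.dist_eq, hβ.dist_eq] using abs_dist_sub_le p p' q
  have hAB' := abs_le.1 hAB
  have hstart := hX.dist_le_of_common_start hGS hα.reverse_s17 hβ.reverse_s17 (u := A - t)
    ⟨by linarith, by linarith [hX.1]⟩ (by linarith)
  rw [sub_sub_cancel] at hstart
  have hmem : B - (A - t) ∈ Icc 0 B := ⟨by linarith [hX.1], by linarith⟩
  calc dist (α t) (β t) ≤ dist (α t) (β (B - (A - t))) + dist (β (B - (A - t))) (β t) :=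
        dist_triangle _ _ _
    _ ≤ 2 * δ + dist p p' := by
        rw [hβ.dist_apply hmem ⟨by linarith [hX.1, dist_nonneg (x := p) (y := p')], htB⟩,
          show B - (A - t) - t = -(A - B) by ring, abs_neg]
        gcongr

theorem dist_le_of_isGeodesicSegment {α β : ℝ → X} {A B : ℝ} {p q p' q' : X}
    (hα : IsGeodesicSegment α 0 A p q) (hβ : IsGeodesicSegment β 0 B p' q')
    {t : ℝ} (ht : δ + dist p p' < t) (htA : t < A - δ - dist q q') (htB : t ≤ B) :
    dist (α t) (β t) ≤ 4 * δ + dist p p' := by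
  obtain ⟨ν, hν⟩ := hGS p q'
  have hlen : A - dist q q' ≤ dist p q' := by
    have := abs_le.1 (abs_dist_sub_le q q' p)
    rw [dist_comm q p, dist_comm q' p, hα.dist_eq] at this
    linarith [this.2]
  have hν' : t ≤ dist p q' := by linarith [hX.1]
  have h₁ := hX.dist_le_of_common_start hGS hα hν
    ⟨by linarith [hX.1, dist_nonneg (x := p) (y := p')], hν'⟩ htA
  have h₂ := hX.dist_le_of_common_end hGS hν hβ ht hν' htB
  linarith [dist_triangle (α t) (ν t) (β t)]

theorem asymptoticRaysFellowTravel : AsymptoticRaysFellowTravel X (4 * δ) := by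
  rintro γ₁ γ₂ h₁ h₂ ⟨C, hC⟩ t ht
  have hδ := hX.1
  have ht0 : 0 ≤ t := by linarith [dist_nonneg (x := γ₁ 0) (y := γ₂ 0)]
  set T := t + δ + C + 1
  have hC0 : 0 ≤ C := dist_nonneg.trans (hC 0 le_rfl)
  have := hX.dist_le_of_isGeodesicSegment hGS (h₁.isGeodesicSegment (T := T) (by positivity))
    (h₂.isGeodesicSegment (T := T) (by positivity)) (t := t) (by linarith)
    (by linarith [hC T (by positivity)]) (by linarith)
  linarith

lemma exists_dist_le_of_quadrilateral_s17 {p₁ p₂ p₃ p₄ : X}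
    {σ₁ σ₂ σ₃ σ₄ : ℝ → X} (h₁ : IsGeodesicSegment σ₁ 0 (dist p₁ p₂) p₁ p₂)
    (h₂ : IsGeodesicSegment σ₂ 0 (dist p₂ p₃) p₂ p₃)
    (h₃ : IsGeodesicSegment σ₃ 0 (dist p₄ p₃) p₄ p₃)
    (h₄ : IsGeodesicSegment σ₄ 0 (dist p₁ p₄) p₁ p₄) {s : ℝ} (hs : s ∈ Icc 0 (dist p₁ p₂)) :
    ∃ w ∈ σ₂ '' Icc 0 (dist p₂ p₃) ∪ σ₃ '' Icc 0 (dist p₄ p₃) ∪ σ₄ '' Icc 0 (dist p₁ p₄),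
      dist (σ₁ s) w ≤ 2 * δ := by
  obtain ⟨τ, hτ⟩ := hGS p₃ p₁
  obtain ⟨P, hP | hP, hsP⟩ := hX.2 p₁ p₂ p₃ σ₁ σ₂ τ h₁ h₂ hτ s hs
  · exact ⟨P, Or.inl (Or.inl hP), by linarith [hX.1]⟩
  obtain ⟨v, hv, rfl⟩ := hP
  obtain ⟨Q, hQ, hvQ⟩ := hX.2 p₃ p₁ p₄ τ σ₄ σ₃ hτ h₄ h₃ v hv
  refine ⟨Q, ?_, by linarith [dist_triangle (σ₁ s) (τ v) Q]⟩
  rcases hQ with hQ | hQ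
  exacts [Or.inr hQ, Or.inl (Or.inr hQ)]

/-- Bisect the chain: the thin triangle on `y i, y j` and the middle point puts `α s` within `δ`
of a geodesic spanning half of the chain. -/
theorem exists_dist_le_of_chain (hstep : ∀ j, dist (y j) (y (j + 1)) ≤ κ) (k : ℕ) :
    ∀ i j : ℕ, i ≤ j + 2 ^ k → j ≤ i + 2 ^ k → ∀ α : ℝ → X,
      IsGeodesicSegment α 0 (dist (y i) (y j)) (y i) (y j) → ∀ s ∈ Icc 0 (dist (y i) (y j)),
        ∃ l ≤ max i j, dist (α s) (y l) ≤ δ * k + κ := by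
  induction k with
  | zero =>
    intro i j hij hji α hα s hs
    refine ⟨i, le_max_left _ _, ?_⟩
    have hlen : dist (y i) (y j) ≤ κ := by
      rcases (by omega : j = i ∨ j = i + 1 ∨ i = j + 1) with rfl | rfl | rfl
      · exact (dist_self _).le.trans (dist_nonneg.trans (hstep j))
      · exact hstep i
      · rw [dist_comm]; exact hstep j
    rw [dist_comm, hα.dist_left hs]
    push_cast
    linarith [hs.2]
  | succ k ih =>
    intro i j hij hji α hα s hs
    set c := (i + j) / 2
    have hk : 2 ^ (k + 1) = 2 * 2 ^ k := by ring
    obtain ⟨β₁, hβ₁⟩ := hGS (y j) (y c)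
    obtain ⟨β₂, hβ₂⟩ := hGS (y c) (y i)
    obtain ⟨P, ⟨v, hv, rfl⟩ | ⟨v, hv, rfl⟩, hsP⟩ := hX.2 _ _ _ α β₁ β₂ hα hβ₁ hβ₂ s hs
    · obtain ⟨l, hl, hdl⟩ := ih j c (by omega) (by omega) β₁ hβ₁ v hv
      refine ⟨l, hl.trans (max_le (le_max_right _ _) (by omega)), ?_⟩
      push_cast
      linarith [dist_triangle (α s) (β₁ v) (y l)]
    · obtain ⟨l, hl, hdl⟩ := ih c i (by omega) (by omega) β₂ hβ₂ v hv
      refine ⟨l, hl.trans (max_le (by omega) (le_max_left _ _)), ?_⟩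
      push_cast
      linarith [dist_triangle (α s) (β₂ v) (y l)]

/-- At a point `ρ s₀` of a geodesic `[y 0, y m]` farthest from the chain `y 0, …, y m`, at
distance `D`, the thin quadrilateral with vertices `ρ (s₀ ∓ 2D)` and their nearest chain points
`y j₁, y j₂` forces `D` to be logarithmic in `|j₁ - j₂|`, while `d(y j₁, y j₂) ≤ 6D`. -/
theorem exists_pair_of_isMaxOn_infDist (hstep : ∀ j, dist (y j) (y (j + 1)) ≤ κ) {m : ℕ}
    {ρ : ℝ → X} (hρ : IsGeodesicSegment ρ 0 (dist (y 0) (y m)) (y 0) (y m)) {s₀ : ℝ}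
    (hs₀ : s₀ ∈ Icc 0 (dist (y 0) (y m)))
    (hmax : IsMaxOn (fun s => infDist (ρ s) (y '' Iic m)) (Icc 0 (dist (y 0) (y m))) s₀) :
    ∃ j₁ ≤ m, ∃ j₂ ≤ m, dist (y j₁) (y j₂) ≤ 6 * infDist (ρ s₀) (y '' Iic m) ∧
      ∀ k : ℕ, j₁ ≤ j₂ + 2 ^ k → j₂ ≤ j₁ + 2 ^ k →
        infDist (ρ s₀) (y '' Iic m) ≤ 2 * (2 * δ + δ * k + κ) := by
  set A := dist (y 0) (y m)
  set D := infDist (ρ s₀) (y '' Iic m)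
  have hD0 : 0 ≤ D := infDist_nonneg
  have hκ : 0 ≤ κ := dist_nonneg.trans (hstep 0)
  have hD_le : ∀ j ≤ m, D ≤ dist (ρ s₀) (y j) := fun j hj =>
    infDist_le_dist_of_mem (mem_image_of_mem y (mem_Iic.2 hj))
  have hnear : ∀ s ∈ Icc 0 A, ∃ j ≤ m, dist (ρ s) (y j) ≤ D := by
    intro s hs
    obtain ⟨_, ⟨j, hj, rfl⟩, hj'⟩ := ((finite_Iic m).image y).isCompact.exists_infDist_eq_dist
      ⟨y 0, mem_image_of_mem y (mem_Iic.2 (Nat.zero_le m))⟩ (ρ s)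
    exact ⟨j, hj, hj' ▸ isMaxOn_iff.1 hmax s hs⟩
  set sp := max 0 (s₀ - 2 * D)
  set sq := min A (s₀ + 2 * D)
  have hsp : sp ∈ Icc 0 A := ⟨le_max_left _ _, max_le hρ.1 (by linarith [hs₀.2])⟩
  have hsq : sq ∈ Icc 0 A := ⟨le_min hρ.1 (by linarith [hs₀.1]), min_le_left _ _⟩
  have hsps₀ : sp ≤ s₀ := max_le hs₀.1 (by linarith)
  have hs₀sq : s₀ ≤ sq := le_min hs₀.2 (by linarith)
  have hp : D ≤ dist (ρ s₀) (ρ sp) := by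
    rcases le_total (s₀ - 2 * D) 0 with h | h
    · rw [show sp = 0 from max_eq_left h, hρ.2.1]; exact hD_le 0 (Nat.zero_le m)
    · rw [hρ.dist_apply hs₀ hsp, show sp = s₀ - 2 * D from max_eq_right h, abs_of_nonneg] <;>
        linarith
  have hq : D ≤ dist (ρ s₀) (ρ sq) := by
    rcases le_total A (s₀ + 2 * D) with h | h
    · rw [show sq = A from min_eq_left h, hρ.2.2.1]; exact hD_le m le_rfl
    · rw [hρ.dist_apply hs₀ hsq, show sq = s₀ + 2 * D from min_eq_right h, abs_of_nonpos] <;>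
        linarith
  obtain ⟨j₁, hj₁, hpj₁⟩ := hnear sp hsp
  obtain ⟨j₂, hj₂, hqj₂⟩ := hnear sq hsq
  have hsub := hρ.subsegment hsp.1 (hsps₀.trans hs₀sq) hsq.2
  have hpq : dist (ρ sp) (ρ sq) = sq - sp := hsub.dist_eq
  refine ⟨j₁, hj₁, j₂, hj₂, ?_, fun k hk₁ hk₂ => ?_⟩
  · have : sq - sp ≤ 4 * D := by linarith [min_le_right A (s₀ + 2 * D), le_max_right 0 (s₀ - 2 * D)]
    linarith [dist_triangle4 (y j₁) (ρ sp) (ρ sq) (y j₂), dist_comm (y j₁) (ρ sp)]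
  obtain ⟨σ₂, hσ₂⟩ := hGS (ρ sq) (y j₂)
  obtain ⟨σ₃, hσ₃⟩ := hGS (y j₁) (y j₂)
  obtain ⟨σ₄, hσ₄⟩ := hGS (ρ sp) (y j₁)
  obtain ⟨w, hw, hdw⟩ := hX.exists_dist_le_of_quadrilateral_s17 hGS hsub.isGeodesicSegment_dist
    hσ₂ hσ₃ hσ₄ (s := s₀ - sp) ⟨by linarith, by linarith⟩
  rw [sub_add_cancel] at hdw
  have hδk : 0 ≤ δ * k := mul_nonneg hX.1 k.cast_nonneg
  rcases hw with (⟨v, hv, rfl⟩ | ⟨v, hv, rfl⟩) | ⟨v, hv, rfl⟩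
  · linarith [hσ₂.dist_add_dist_le hv (ρ s₀), hD_le j₂ hj₂]
  · obtain ⟨l, hl, hdl⟩ := hX.exists_dist_le_of_chain hGS hstep k j₁ j₂ hk₁ hk₂ σ₃ hσ₃ v hv
    linarith [hD_le l (hl.trans (max_le hj₁ hj₂)), dist_triangle (ρ s₀) (σ₃ v) (y l)]
  · linarith [hσ₄.dist_add_dist_le hv (ρ s₀), hD_le j₁ hj₁]

/-- For the farthest point, `D ≤ O(δ log |j₁ - j₂|)` and `|j₁ - j₂| = O(D)`, which bounds `D`. -/
theorem exists_forall_dist_chain_le (hstep : ∀ j, dist (y j) (y (j + 1)) ≤ κ) (hr : 0 < r)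
    (hqi : ∀ i j : ℕ, r * |(i : ℝ) - j| - b ≤ dist (y i) (y j)) :
    ∃ Λ, 0 ≤ Λ ∧ ∀ (m : ℕ) (ρ : ℝ → X),
      IsGeodesicSegment ρ 0 (dist (y 0) (y m)) (y 0) (y m) →
        ∀ s ∈ Icc 0 (dist (y 0) (y m)), ∃ j ≤ m, dist (ρ s) (y j) ≤ Λ := by
  have hδ := hX.1
  have hκ : 0 ≤ κ := dist_nonneg.trans (hstep 0)
  obtain ⟨k₀, hk₀⟩ :=
    exists_forall_le_of_two_pow_le (2 * (24 * δ + 12 * κ + b) / r + 1) (24 * δ / r)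
  refine ⟨2 * (2 * δ + δ * k₀ + κ), by positivity, fun m ρ hρ s hs => ?_⟩
  set S := y '' Iic m
  obtain ⟨s₀, hs₀, hmax⟩ := isCompact_Icc.exists_isMaxOn (nonempty_Icc.2 hρ.1)
    ((continuous_infDist_pt S).comp_continuousOn hρ.continuousOn)
  obtain ⟨j₁, hj₁, j₂, hj₂, h12, hD⟩ :=
    hX.exists_pair_of_isMaxOn_infDist hGS hstep hρ hs₀ (s₀ := s₀) hmax
  set M := j₁ - j₂ + (j₂ - j₁) with hM
  set k := Nat.clog 2 M
  have hMk : M ≤ 2 ^ k := Nat.le_pow_clog one_lt_two M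
  have hDk := hD k (by omega) (by omega)
  have hkk₀ : k ≤ k₀ := by
    refine hk₀ k ?_
    have hM : (M : ℝ) ≤ (24 * δ + 12 * κ + b + 12 * δ * k) / r := by
      rw [le_div_iff₀ hr, Nat.cast_sub_add_sub]
      linarith [hqi j₁ j₂]
    calc (2 : ℝ) ^ k ≤ 2 * M + 1 := by exact_mod_cast Nat.two_pow_clog_le M
      _ ≤ 2 * ((24 * δ + 12 * κ + b + 12 * δ * k) / r) + 1 := by gcongr
      _ = 2 * (24 * δ + 12 * κ + b) / r + 1 + 24 * δ / r * k := by ring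
  obtain ⟨_, ⟨j, hj, rfl⟩, hjs⟩ := ((finite_Iic m).image y).isCompact.exists_infDist_eq_dist
    ⟨y 0, mem_image_of_mem y (mem_Iic.2 (Nat.zero_le m))⟩ (ρ s)
  refine ⟨j, hj, ?_⟩
  rw [← hjs]
  calc infDist (ρ s) S ≤ infDist (ρ s₀) S := isMaxOn_iff.1 hmax s hs
    _ ≤ 2 * (2 * δ + δ * k + κ) := hDk
    _ ≤ 2 * (2 * δ + δ * k₀ + κ) := by gcongr

/-- **Morse lemma** for quasi-geodesic chains. The parameters of the geodesic close to
`y 0, …, y n` and to `y n, …, y m` form two closed sets covering it, so they meet. -/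
theorem exists_forall_dist_geodesic_le (hstep : ∀ j, dist (y j) (y (j + 1)) ≤ κ) (hr : 0 < r)
    (hqi : ∀ i j : ℕ, r * |(i : ℝ) - j| - b ≤ dist (y i) (y j)) :
    ∃ Λ, ∀ m n : ℕ, n ≤ m → ∀ ρ : ℝ → X,
      IsGeodesicSegment ρ 0 (dist (y 0) (y m)) (y 0) (y m) →
        ∃ u ∈ Icc 0 (dist (y 0) (y m)), dist (y n) (ρ u) ≤ Λ := by
  obtain ⟨Λ, hΛ, hnear⟩ := hX.exists_forall_dist_chain_le hGS hstep hr hqi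
  refine ⟨Λ + κ * ((2 * Λ + b) / r), fun m n hnm ρ hρ => ?_⟩
  set A := dist (y 0) (y m)
  set F : ℕ → Set ℝ := fun j => Icc 0 A ∩ (fun s => dist (ρ s) (y j)) ⁻¹' Iic Λ
  have hF : ∀ j, IsClosed (F j) := fun j =>
    ((continuous_id.dist continuous_const).comp_continuousOn
      hρ.continuousOn).preimage_isClosed_of_isClosed isClosed_Icc isClosed_Iic
  obtain ⟨s, -, hs₁, hs₂⟩ := isPreconnected_closed_iff.1 isPreconnected_Icc
    (⋃ j ∈ Iic n, F j) (⋃ j ∈ Icc n m, F j)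
    ((finite_Iic n).isClosed_biUnion fun j _ => hF j)
    ((finite_Icc n m).isClosed_biUnion fun j _ => hF j)
    (fun s hs => by
      obtain ⟨j, hj, hsj⟩ := hnear m ρ hρ s hs
      rcases le_total j n with hjn | hjn
      exacts [Or.inl (mem_biUnion hjn ⟨hs, hsj⟩), Or.inr (mem_biUnion ⟨hjn, hj⟩ ⟨hs, hsj⟩)])
    ⟨0, left_mem_Icc.2 hρ.1, mem_biUnion (mem_Iic.2 (Nat.zero_le n))
      ⟨left_mem_Icc.2 hρ.1, by simpa [hρ.2.1] using hΛ⟩⟩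
    ⟨A, right_mem_Icc.2 hρ.1, mem_biUnion ⟨hnm, le_rfl⟩
      ⟨right_mem_Icc.2 hρ.1, by simpa [hρ.2.2.1] using hΛ⟩⟩
  obtain ⟨j₁, hj₁, hsA, hsj₁⟩ := mem_iUnion₂.1 hs₁
  obtain ⟨j₂, ⟨hj₂n, -⟩, -, hsj₂⟩ := mem_iUnion₂.1 hs₂
  have h₁ : dist (ρ s) (y j₁) ≤ Λ := hsj₁
  have h₂ : dist (ρ s) (y j₂) ≤ Λ := hsj₂
  rw [mem_Iic] at hj₁
  have hgap : ((n - j₁ : ℕ) : ℝ) ≤ (2 * Λ + b) / r := by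
    have hqi' := hqi j₁ j₂
    rw [abs_sub_comm, abs_of_nonneg (by simpa using hj₁.trans hj₂n)] at hqi'
    have hn : ((n - j₁ : ℕ) : ℝ) * r ≤ (j₂ - j₁) * r := by
      rw [Nat.cast_sub hj₁]
      gcongr
    rw [le_div_iff₀ hr]
    linarith [dist_triangle (y j₁) (ρ s) (y j₂), dist_comm (y j₁) (ρ s)]
  have hwalk : dist (y j₁) (y n) ≤ κ * ((2 * Λ + b) / r) := by
    refine (dist_le_Ico_sum_of_dist_le hj₁ fun {k} _ _ => hstep k).trans ?_
    rw [Finset.sum_const, Nat.card_Ico, nsmul_eq_mul, mul_comm]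
    exact mul_le_mul_of_nonneg_left hgap (dist_nonneg.trans (hstep 0))
  refine ⟨s, hsA, ?_⟩
  linarith [dist_triangle (y n) (y j₁) (ρ s), dist_comm (y n) (y j₁), dist_comm (y j₁) (ρ s)]

end GromovHyperbolic

lemma orbitEscapesLinearly_of_lower_bound {X G : Type*} [MetricSpace X] [Group G] [MulAction G X]
    {g : G} {r b : ℝ} (hr : 0 < r) (hb : 0 ≤ b) {x : X}
    (hqi : ∀ i j : ℕ, r * |(i : ℝ) - j| - b ≤ dist (g ^ i • x) (g ^ j • x)) (o : X) :
    OrbitEscapesLinearly g o x := by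
  refine ⟨r, b + dist o x, hr, by positivity, fun n => ?_⟩
  have h := hqi 0 n
  rw [pow_zero, one_smul, Nat.cast_zero, zero_sub, abs_neg, Nat.abs_cast] at h
  linarith [dist_triangle x o (g ^ n • x), dist_comm o x]

section HyperbolicIsometry

variable {X G : Type*} [MetricSpace X] [Group G] [MulAction G X] (hiso : IsometricAction G X)
  {g : G}
include hiso

lemma QIHyperbolic.exists_orbit_lower_bound (hqi : QIHyperbolic X g) (x : X) :
    ∃ r b : ℝ, 0 < r ∧ 0 ≤ b ∧
      ∀ i j : ℕ, r * |(i : ℝ) - j| - b ≤ dist (g ^ i • x) (g ^ j • x) := by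
  obtain ⟨x₀, a, b, ha, hb, hx₀⟩ := hqi
  refine ⟨a⁻¹, b + 2 * dist x x₀, inv_pos.2 ha, by positivity, fun i j => ?_⟩
  have h := (hx₀ i j).1
  simp only [zpow_natCast, Int.cast_natCast] at h
  have := dist_triangle4 (g ^ i • x₀) (g ^ i • x) (g ^ j • x) (g ^ j • x₀)
  rw [hiso.dist_smul, hiso.dist_smul, dist_comm x₀ x] at this
  linarith

/-- By the Morse lemma `gⁿx` is close to a geodesic `[x, gᵐx]`, hence by thin triangles to a
geodesic `[γ 0, gᵐx]`, which for large `m` fellow-travels `γ` up to time `d(γ 0, gⁿx)`. -/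
theorem GromovHyperbolic.orbitTracksRay {δ : ℝ} (hX : GromovHyperbolic X δ)
    (hGS : GeodesicSpace X) (hqi : QIHyperbolic X g) {γ : ℝ → X} (hattr : AttractsTo g γ)
    (x : X) : OrbitTracksRay g γ x := by
  set y : ℕ → X := fun n => g ^ n • x
  obtain ⟨r, b, hr, -, hyqi⟩ := hqi.exists_orbit_lower_bound hiso x
  obtain ⟨Λ, hΛ⟩ := hX.exists_forall_dist_geodesic_le hGS (y := y)
    (fun j => (hiso.dist_pow_smul_succ g x j).le) hr hyqi
  obtain ⟨htend, C, hC⟩ := hattr.2 x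
  choose ρ hρ using fun m => hGS (y 0) (y m)
  choose σ hσ using fun m => hGS (γ 0) (y m)
  have hy0 : y 0 = x := by simp [y]
  set D₀ := dist x (γ 0)
  set t : ℕ → ℝ := fun n => dist (γ 0) (y n)
  refine ⟨2 * (Λ + 2 * δ + D₀) + C, (htend.eventually_ge_atTop (δ + 2 * D₀ + Λ + 1)).mono
    fun n htn => ?_⟩
  obtain ⟨m, hσm, htm, hnm⟩ := ((hC (t n) dist_nonneg σ hσ).and
    ((htend.eventually_ge_atTop (t n + D₀ + Λ)).and (eventually_ge_atTop n))).exists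
  obtain ⟨u, hu, hnu⟩ := hΛ m n hnm (ρ m) (hρ m)
  have hu₀ : dist (y 0) (ρ m u) = u := (hρ m).dist_left hu
  rw [hy0] at hu₀
  have hux := dist_triangle x (y n) (ρ m u)
  have hxu := dist_triangle x (ρ m u) (y n)
  have hox := dist_triangle (γ 0) x (y n)
  have hxo := dist_triangle x (γ 0) (y n)
  have hclose := hX.dist_le_of_common_end hGS (hρ m) (hσ m) (t := u)
    (by rw [hy0]; linarith [dist_comm x (γ 0), dist_comm (y n) (ρ m u)]) hu.2
    (by linarith [dist_comm x (γ 0), dist_comm (y n) (ρ m u)])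
  rw [hy0] at hclose
  have hfar := (hσ m).dist_apply_dist_le (p := y n) (r := Λ + 2 * δ + D₀)
    ⟨hu.1, by linarith [dist_comm x (γ 0), dist_comm (y n) (ρ m u)]⟩
    (by linarith [dist_triangle (y n) (ρ m u) (σ m u)])
    (by linarith [dist_nonneg (x := x) (y := γ 0), dist_nonneg.trans hnu])
  linarith [dist_triangle (y n) (σ m (t n)) (γ (t n))]

end HyperbolicIsometry

/-- Let `g` be a hyperbolic isometry of an NPC space with attracting
point `ξ` (the boundary point of `γ`), and let `x ∈ X`. An isometry `h` stabilizes `ξ`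
iff the sequence `d(h·gⁿx, gⁿx)` is bounded over `n ≥ 0`; moreover there are constants
`c` (independent of `h`) and `A, B ≥ 0` such that every `h` stabilizing `ξ` satisfies
`d(h·gⁿx, gⁿx) ≤ d(hx, x) + c` for all `n ≥ n₀`, for some `n₀ ≤ A·d(hx,x) + B`
(a bound of linear growth in `d(hx, x)`). -/
theorem stabilizes_attracting_point_iff_bounded
    {X G : Type*} [MetricSpace X] [Group G] [MulAction G X]
    (hNPC : NPCSpace X) (hiso : IsometricAction G X)
    (g : G) (hhyp : IsHyperbolicIsom X g) (γ : ℝ → X) (hattr : AttractsTo g γ)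
    (x : X) :
    (∀ h : G, AsympRays (fun t => h • γ t) γ ↔
      ∃ C : ℝ, ∀ n : ℕ, dist (h • (g ^ n • x)) (g ^ n • x) ≤ C) ∧
    (∃ c A B : ℝ, 0 ≤ A ∧ 0 ≤ B ∧
      ∀ h : G, AsympRays (fun t => h • γ t) γ →
        ∃ n₀ : ℕ, (n₀ : ℝ) ≤ A * dist (h • x) x + B ∧
          ∀ n : ℕ, n₀ ≤ n → dist (h • (g ^ n • x)) (g ^ n • x) ≤ dist (h • x) x + c) := by
  rcases hhyp with ⟨-, hX, L, hL, k, hk, htr⟩ | ⟨-, ⟨δ, hX⟩, hqi⟩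
  · obtain ⟨C, hγL⟩ := hX.exists_dist_ray_axis_le hL hk htr hattr
    exact stabilizer_criterion_of_orbitTracksRay hiso le_rfl hattr.1 hX.asymptoticRaysFellowTravel
      (orbitTracksRay_of_translate hiso hL hk htr hγL x)
      (orbitEscapesLinearly_of_translate hiso hL hk htr (γ 0) x)
  · obtain ⟨r, b, hr, hb, hrb⟩ := hqi.exists_orbit_lower_bound hiso x
    exact stabilizer_criterion_of_orbitTracksRay hiso (by linarith [hX.1]) hattr.1
      (hX.asymptoticRaysFellowTravel hNPC.1) (hX.orbitTracksRay hiso hNPC.1 hqi hattr x)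
      (orbitEscapesLinearly_of_lower_bound hr hb hrb (γ 0))
end
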